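/- arXiv:2503.20727 — 6 statements merged into one kernel-verified Lean document; each statement's English description precedes it below -/
import Mathlib

section
/- For all integers n ≥ 1, a ≥ n, and i ≥ 0, we have ∑_{r=0}^{2^n-1} (-1)^r · C(r, i) · C(2^a - 1 - i, r) ≡ 0 (mod 2^n), where C denotes the binomial coefficient. -/
/-- If `P ∣ t` and `i < t` then `(t - 1 - i) % P = P - 1 - i % P`. -/
lemma key_mod (P t i : ℕ) (hP : 0 < P) (hdvd : P ∣ t) (hit : i < t) :
    (t - 1 - i) % P = P - 1 - i % P := by
  obtain ⟨q, rfl⟩ := hdvd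
  have hs : i % P < P := Nat.mod_lt _ hP
  have hi : P * (i / P) + i % P = i := Nat.div_add_mod i P
  set c := i / P with hc
  set s := i % P with hsdef
  have hcq : c + 1 ≤ q := by
    by_contra h
    have : P * q ≤ P * c := Nat.mul_le_mul_left _ (by omega)
    omega
  have h2 : P * (c + 1) ≤ P * q := Nat.mul_le_mul_left _ hcq
  have h3 : P * (q - (c + 1)) = P * q - P * (c + 1) := Nat.mul_sub P q (c + 1)
  have hmul : P * (c + 1) = P * c + P := by rw [Nat.mul_add, Nat.mul_one]
  have heq : P * q - 1 - i = P * (q - (c + 1)) + (P - 1 - s) := by omega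
  rw [heq, Nat.mul_add_mod, Nat.mod_eq_of_lt (by omega)]

/-- Telescoping closed form for the truncated alternating sum. -/
lemma lem_sum (N i : ℕ) (hiN : i < N) :
    ∀ m,  i ≤ m → m ≤ N →
      ∑ r ∈ Finset.range (m + 1),
          (-1 : ℤ) ^ r * (r.choose i : ℤ) * (N.choose r : ℤ)
        = (-1) ^ m * (N.choose i : ℤ) * (((N - 1 - i).choose (m - i) : ℕ) : ℤ) := by
  intro m hm
  induction m, hm using Nat.le_induction with
  | base =>
    intro _
    rw [Finset.sum_range_succ]
    have h0 : ∑ r ∈ Finset.range i,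
        (-1 : ℤ) ^ r * (r.choose i : ℤ) * (N.choose r : ℤ) = 0 := by
      apply Finset.sum_eq_zero
      intro r hr
      rw [Nat.choose_eq_zero_of_lt (Finset.mem_range.mp hr)]
      simp
    rw [h0]
    simp [Nat.choose_self]
  | succ m hm ih =>
    intro hm1
    rw [Finset.sum_range_succ, ih (by omega)]
    have key : N.choose (m + 1) * (m + 1).choose i
        = N.choose i * (N - i).choose (m + 1 - i) := Nat.choose_mul (by omega)
    have pascal : (N - i).choose (m + 1 - i)
        = (N - 1 - i).choose (m - i) + (N - 1 - i).choose (m + 1 - i) := by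
      have e1 : N - i = (N - 1 - i) + 1 := by omega
      have e2 : m + 1 - i = (m - i) + 1 := by omega
      rw [e1, e2, Nat.choose_succ_succ]
    rw [pascal] at key
    have keyZ : (N.choose (m + 1) : ℤ) * ((m + 1).choose i : ℤ)
        = (N.choose i : ℤ) * (((N - 1 - i).choose (m - i) : ℤ)
            + ((N - 1 - i).choose (m + 1 - i) : ℤ)) := by exact_mod_cast key
    linear_combination ((-1 : ℤ) ^ (m + 1)) * keyZ

/-- Kummer-style divisibility: the product of the two binomial coefficients
in the closed form is divisible by `2^n`. -/
lemma lem_kummer (n a i : ℕ) (hn : 1 ≤ n) (ha : n ≤ a) (hi : i < 2 ^ n)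
    (hia : i + 2 ^ n < 2 ^ a) :
    2 ^ n ∣ (2 ^ a - 1 - i).choose i * (2 ^ a - 2 - 2 * i).choose (2 ^ n - 1 - i) := by
  have hp : Prime (2 : ℕ) := Nat.prime_two.prime
  have hpow : 2 ^ n ≤ 2 ^ a := Nat.pow_le_pow_right (by norm_num) ha
  have hn2 : 2 ≤ 2 ^ n := by
    calc 2 = 2 ^ 1 := rfl
    _ ≤ 2 ^ n := Nat.pow_le_pow_right (by norm_num) hn
  have hA_le : i ≤ 2 ^ a - 1 - i := by omega
  have hB_le : 2 ^ n - 1 - i ≤ 2 ^ a - 2 - 2 * i := by omega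
  have hpa : 2 ^ (a + 1) = 2 * 2 ^ a := by ring
  have hlogA : Nat.log 2 (2 ^ a - 1 - i) < a + 1 := by
    apply Nat.log_lt_of_lt_pow (by omega)
    omega
  have hlogB : Nat.log 2 (2 ^ a - 2 - 2 * i) < a + 1 := by
    rcases Nat.eq_zero_or_pos (2 ^ a - 2 - 2 * i) with h | h
    · rw [h]
      simp
    · apply Nat.log_lt_of_lt_pow (by omega)
      omega
  have hAm := Nat.Prime.emultiplicity_choose Nat.prime_two hA_le hlogA
  have hBm := Nat.Prime.emultiplicity_choose Nat.prime_two hB_le hlogB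
  set SA := {x ∈ Finset.Ico 1 (a + 1) |
      2 ^ x ≤ i % 2 ^ x + ((2 ^ a - 1 - i) - i) % 2 ^ x} with hSA
  set SB := {x ∈ Finset.Ico 1 (a + 1) |
      2 ^ x ≤ (2 ^ n - 1 - i) % 2 ^ x
        + ((2 ^ a - 2 - 2 * i) - (2 ^ n - 1 - i)) % 2 ^ x} with hSB
  have hsub : Finset.Ico 1 (n + 1) ⊆ SA ∪ SB := by
    intro j hj
    rw [Finset.mem_Ico] at hj
    obtain ⟨hj1, hjn⟩ := hj
    have hjn' : j ≤ n := by omega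
    have hja : j ≤ a := le_trans hjn' ha
    have hdvdn : (2 ^ j : ℕ) ∣ 2 ^ n := pow_dvd_pow 2 hjn'
    have hdvda : (2 ^ j : ℕ) ∣ 2 ^ a := pow_dvd_pow 2 hja
    have hjpos : 0 < 2 ^ j := Nat.pow_pos (by norm_num)
    have hj2 : 2 ^ j = 2 * 2 ^ (j - 1) := by
      conv_lhs => rw [show j = (j - 1) + 1 by omega]
      rw [pow_succ]
      ring
    set s := i % 2 ^ j with hs
    have hslt : s < 2 ^ j := Nat.mod_lt _ hjpos
    have hmemIco : j ∈ Finset.Ico 1 (a + 1) := Finset.mem_Ico.mpr ⟨hj1, by omega⟩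
    rcases le_or_gt (2 ^ (j - 1)) s with hbit | hbit
    · -- carry in A
      apply Finset.mem_union_left
      rw [hSA, Finset.mem_filter]
      refine ⟨hmemIco, ?_⟩
      have e : (2 ^ a - 1 - i) - i = 2 ^ a - 1 - 2 * i := by omega
      rw [e, key_mod (2 ^ j) (2 ^ a) (2 * i) hjpos hdvda (by omega)]
      have h2s : (2 * s) % 2 ^ j = (2 * i) % 2 ^ j := (Nat.mod_modEq i (2 ^ j)).mul_left 2
      have h2s' : (2 * s) % 2 ^ j = 2 * s - 2 ^ j := by
        rw [Nat.mod_eq_sub_mod (by omega), Nat.mod_eq_of_lt (by omega)]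
      omega
    · -- carry in B
      apply Finset.mem_union_right
      rw [hSB, Finset.mem_filter]
      refine ⟨hmemIco, ?_⟩
      have e : (2 ^ a - 2 - 2 * i) - (2 ^ n - 1 - i) = (2 ^ a - 2 ^ n) - 1 - i := by omega
      rw [e, key_mod (2 ^ j) (2 ^ n) i hjpos hdvdn hi,
        key_mod (2 ^ j) (2 ^ a - 2 ^ n) i hjpos (Nat.dvd_sub hdvda hdvdn) (by omega)]
      omega
  have hcard : n ≤ SA.card + SB.card := by
    calc n = (Finset.Ico 1 (n + 1)).card := by simp [Nat.card_Ico]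
    _ ≤ (SA ∪ SB).card := Finset.card_le_card hsub
    _ ≤ SA.card + SB.card := Finset.card_union_le _ _
  have hle : (n : ℕ∞) ≤ emultiplicity 2
      ((2 ^ a - 1 - i).choose i * (2 ^ a - 2 - 2 * i).choose (2 ^ n - 1 - i)) := by
    rw [emultiplicity_mul hp, hAm, hBm]
    exact_mod_cast hcard
  exact pow_dvd_of_le_emultiplicity hle

/-- For all integers `n ≥ 1`, `a ≥ n`, `i ≥ 0`,
`∑_{r=0}^{2^n-1} (-1)^r C(r,i) C(2^a-1-i, r) ≡ 0 (mod 2^n)`.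
(Note: whenever `C(r,i) ≠ 0` we have `i ≤ r ≤ 2^n-1 ≤ 2^a-1`, so truncated
subtraction agrees with the convention `C(N,k) = 0` for `N < 0`.) -/
theorem stmt0 (n a i : ℕ) (hn : 1 ≤ n) (ha : n ≤ a) :
    (2 ^ n : ℤ) ∣ ∑ r ∈ Finset.range (2 ^ n),
      (-1 : ℤ) ^ r * (r.choose i : ℤ) * ((2 ^ a - 1 - i).choose r : ℤ) := by
  have hpow : 2 ^ n ≤ 2 ^ a := Nat.pow_le_pow_right (by norm_num) ha
  have hn2 : 2 ≤ 2 ^ n := by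
    calc 2 = 2 ^ 1 := rfl
    _ ≤ 2 ^ n := Nat.pow_le_pow_right (by norm_num) hn
  by_cases hi : 2 ^ n ≤ i
  · -- every term vanishes: r < 2^n ≤ i
    have h0 : ∑ r ∈ Finset.range (2 ^ n),
        (-1 : ℤ) ^ r * (r.choose i : ℤ) * ((2 ^ a - 1 - i).choose r : ℤ) = 0 := by
      apply Finset.sum_eq_zero
      intro r hr
      rw [Finset.mem_range] at hr
      rw [Nat.choose_eq_zero_of_lt (show r < i by omega)]
      simp
    rw [h0]; exact dvd_zero _
  push_neg at hi
  by_cases hN : 2 ^ a - 1 - i < i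
  · -- every term vanishes
    have h0 : ∑ r ∈ Finset.range (2 ^ n),
        (-1 : ℤ) ^ r * (r.choose i : ℤ) * ((2 ^ a - 1 - i).choose r : ℤ) = 0 := by
      apply Finset.sum_eq_zero
      intro r hr
      rcases lt_or_ge r i with h | h
      · rw [Nat.choose_eq_zero_of_lt h]; simp
      · rw [Nat.choose_eq_zero_of_lt (show 2 ^ a - 1 - i < r by omega)]; simp
    rw [h0]; exact dvd_zero _
  push_neg at hN
  have ha2 : 2 ^ a = 2 * 2 ^ (a - 1) := by
    conv_lhs => rw [show a = (a - 1) + 1 by omega]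
    rw [pow_succ]; ring
  have hiN : i < 2 ^ a - 1 - i := by omega
  by_cases hib : i + 2 ^ n < 2 ^ a
  · -- main case
    have hmN : 2 ^ n - 1 ≤ 2 ^ a - 1 - i := by omega
    have hsum := lem_sum (2 ^ a - 1 - i) i hiN (2 ^ n - 1) (by omega) hmN
    rw [show (2 ^ n : ℕ) = (2 ^ n - 1) + 1 by omega, hsum]
    have e1 : (2 ^ a - 1 - i) - 1 - i = 2 ^ a - 2 - 2 * i := by omega
    rw [e1]
    have hdvd := lem_kummer n a i hn ha hi hib
    have hz : (2 ^ n : ℤ) ∣ ((2 ^ a - 1 - i).choose i : ℤ)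
        * ((2 ^ a - 2 - 2 * i).choose (2 ^ n - 1 - i) : ℤ) := by
      exact_mod_cast Int.natCast_dvd_natCast.mpr hdvd
    rw [mul_assoc]
    exact hz.mul_left _
  · -- N ≤ 2^n - 1 : sum truncates to full orthogonality, which is 0
    push_neg at hib
    set N := 2 ^ a - 1 - i with hNdef
    have hN2n : N + 1 ≤ 2 ^ n := by omega
    have hsplit : ∑ r ∈ Finset.range (N + 1),
        (-1 : ℤ) ^ r * (r.choose i : ℤ) * (N.choose r : ℤ)
        = ∑ r ∈ Finset.range (2 ^ n),
          (-1 : ℤ) ^ r * (r.choose i : ℤ) * (N.choose r : ℤ) := by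
      apply Finset.sum_subset (Finset.range_subset_range.mpr hN2n)
      intro r _ hr
      rw [Finset.mem_range, not_lt] at hr
      rw [Nat.choose_eq_zero_of_lt (show N < r by omega)]
      simp
    rw [← hsplit, lem_sum N i hiN N (by omega) le_rfl,
      Nat.choose_eq_zero_of_lt (show N - 1 - i < N - i by omega)]
    simp
end

section
/- Fix a prime p and an integer 1 ≤ b ≤ p−1. For an integer r ≥ 0 with binary expansion r = ∑_i r_i 2^i (r_i ∈ {0,1}), define m(r) = b · ∑_i r_i p^i. Then for all n ≥ 1, a ≥ n, and i ≥ 0: ∑_{r=0}^{2^n-1} (-1)^r · C(m(r), i) · C(m(2^a−1) − i, m(r)) ≡ 0 (mod p^n). -/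
/-- `m(r) = b · ∑_i r_i p^i`, where `r = ∑_i r_i 2^i` is the binary expansion of `r`.
(All binary digits of `r` with index `≥ r+1` vanish, so the range suffices.) -/
def digitSub (p b r : ℕ) : ℕ :=
  ∑ i ∈ Finset.range (r + 1), if r.testBit i then b * p ^ i else 0

namespace Stmt1Aux

open Finset

/-- digit sum truncated to `n` binary digits -/
def mm (p b n r : ℕ) : ℕ := ∑ j ∈ Finset.range n, if r.testBit j then b * p ^ j else 0

/-- `cc p b n = b(1 + p + ... + p^(n-1))` -/
def cc (p b n : ℕ) : ℕ := ∑ j ∈ Finset.range n, b * p ^ j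

lemma mm_mono {p b r N K : ℕ} (hNK : N ≤ K) (h : r < 2 ^ N) :
    mm p b K r = mm p b N r := by
  unfold mm
  rw [← Finset.sum_subset (Finset.range_subset_range.mpr hNK)]
  intro j hj hjN
  have hjN' : N ≤ j := by simpa using hjN
  have : r < 2 ^ j := lt_of_lt_of_le h (Nat.pow_le_pow_right (by norm_num) hjN')
  rw [Nat.testBit_lt_two_pow this]
  simp

lemma digitSub_eq_mm {p b N r : ℕ} (h : r < 2 ^ N) : digitSub p b r = mm p b N r := by
  have h1 : digitSub p b r = mm p b (r + 1) r := rfl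
  have h2 : r < 2 ^ (r + 1) := lt_of_lt_of_le Nat.lt_two_pow_self (Nat.pow_le_pow_right (by norm_num) (Nat.le_succ r))
  rcases le_total N (r + 1) with hle | hle
  · rw [h1, mm_mono hle h]
  · rw [h1, ← mm_mono hle h2]

lemma mm_le_cc (p b n r : ℕ) : mm p b n r ≤ cc p b n := by
  apply Finset.sum_le_sum
  intro j _
  split <;> simp

lemma cc_lt_pow {p b : ℕ} (hb : b < p) (n : ℕ) : cc p b n < p ^ n := by
  induction n with
  | zero => simp [cc]
  | succ n ih =>
    have : cc p b (n + 1) = cc p b n + b * p ^ n := Finset.sum_range_succ _ n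
    rw [this, pow_succ]
    have h1 : cc p b n + b * p ^ n < p ^ n + b * p ^ n := by omega
    have h2 : p ^ n + b * p ^ n ≤ p ^ n * p := by
      have : p ^ n * (1 + b) ≤ p ^ n * p := Nat.mul_le_mul_left _ (by omega)
      calc p ^ n + b * p ^ n = p ^ n * (1 + b) := by ring
        _ ≤ p ^ n * p := this
    omega

lemma mm_top (p b a : ℕ) : mm p b a (2 ^ a - 1) = cc p b a := by
  apply Finset.sum_congr rfl
  intro j hj
  rw [Nat.testBit_two_pow_sub_one]
  simp [Finset.mem_range.mp hj]

lemma cc_succ (p b n : ℕ) : cc p b (n + 1) = cc p b n + b * p ^ n :=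
  Finset.sum_range_succ _ n

lemma mm_low {p b n r : ℕ} (h : r < 2 ^ n) : mm p b (n + 1) r = mm p b n r := by
  unfold mm
  rw [Finset.sum_range_succ, Nat.testBit_lt_two_pow h]
  simp

lemma mm_high {p b n r : ℕ} (h : r < 2 ^ n) :
    mm p b (n + 1) (2 ^ n + r) = mm p b n r + b * p ^ n := by
  unfold mm
  rw [Finset.sum_range_succ]
  congr 1
  · apply Finset.sum_congr rfl
    intro j hj
    rw [Nat.testBit_two_pow_add_gt (Finset.mem_range.mp hj)]
  · rw [Nat.testBit_two_pow_add_eq, Nat.testBit_lt_two_pow h]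
    simp

lemma mm_compl (p b : ℕ) : ∀ n r, r < 2 ^ n →
    mm p b n r + mm p b n (2 ^ n - 1 - r) = cc p b n := by
  intro n
  induction n with
  | zero =>
    intro r hr
    interval_cases r
    simp [mm, cc]
  | succ n ih =>
    intro r hr
    have hpow : (0:ℕ) < 2 ^ n := Nat.pow_pos (by norm_num)
    rcases lt_or_ge r (2 ^ n) with h | h
    · have hco : 2 ^ (n + 1) - 1 - r = 2 ^ n + (2 ^ n - 1 - r) := by
        rw [pow_succ] at hr ⊢; omega
      have hlt : 2 ^ n - 1 - r < 2 ^ n := by omega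
      rw [hco, mm_low h, mm_high hlt, cc_succ]
      have := ih r h
      omega
    · have hs : r = 2 ^ n + (r - 2 ^ n) := by omega
      have hslt : r - 2 ^ n < 2 ^ n := by rw [pow_succ] at hr; omega
      have hco : 2 ^ (n + 1) - 1 - r = 2 ^ n - 1 - (r - 2 ^ n) := by
        rw [pow_succ] at hr ⊢; omega
      have hcolt : 2 ^ n - 1 - (r - 2 ^ n) < 2 ^ n := by omega
      rw [hco, hs, mm_high hslt]
      rw [show (2:ℕ) ^ n + (r - 2 ^ n) - 2 ^ n = r - 2 ^ n from by omega, mm_low hcolt, cc_succ]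
      have := ih (r - 2 ^ n) hslt
      omega

/-- the central alternating double-binomial sum -/
def Phi (p b n e0 e2 : ℕ) : ℤ :=
  ∑ r ∈ Finset.range (2 ^ n),
    (-1 : ℤ) ^ r * ((cc p b n - mm p b n r).choose e0 : ℤ) * ((mm p b n r).choose e2 : ℤ)

lemma Phi_diag {p b n : ℕ} (hn : 1 ≤ n) (e : ℕ) : Phi p b n e e = 0 := by
  unfold Phi
  have h2 : (2:ℕ) ∣ 2 ^ n := dvd_pow_self 2 (by omega)
  have hpos : (0:ℕ) < 2 ^ n := Nat.pow_pos (by norm_num)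
  apply Finset.sum_involution (g := fun r _ => 2 ^ n - 1 - r)
  · intro r hr
    have hr' : r < 2 ^ n := Finset.mem_range.mp hr
    have hcompl := mm_compl p b n r hr'
    have hle := mm_le_cc p b n r
    have hmm : mm p b n (2 ^ n - 1 - r) = cc p b n - mm p b n r := by omega
    rw [hmm, show cc p b n - (cc p b n - mm p b n r) = mm p b n r from by omega]
    have hodd : Odd ((2:ℕ) ^ n - 1) := by
      rcases h2 with ⟨k, hk⟩; exact ⟨k - 1, by omega⟩
    have hsign : (-1 : ℤ) ^ (2 ^ n - 1 - r) * (-1 : ℤ) ^ r = -1 := by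
      rw [← pow_add, show 2 ^ n - 1 - r + r = 2 ^ n - 1 from by omega]
      exact hodd.neg_one_pow
    have hr2 : (-1 : ℤ) ^ r * (-1 : ℤ) ^ r = 1 := by
      rw [← pow_add]; exact Even.neg_one_pow ⟨r, rfl⟩
    have hneg : (-1 : ℤ) ^ (2 ^ n - 1 - r) = -(-1 : ℤ) ^ r := by
      calc (-1 : ℤ) ^ (2 ^ n - 1 - r)
          = (-1 : ℤ) ^ (2 ^ n - 1 - r) * ((-1 : ℤ) ^ r * (-1 : ℤ) ^ r) := by rw [hr2, mul_one]
        _ = ((-1 : ℤ) ^ (2 ^ n - 1 - r) * (-1 : ℤ) ^ r) * (-1 : ℤ) ^ r := by ring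
        _ = -(-1 : ℤ) ^ r := by rw [hsign]; ring
    rw [hneg]; ring
  · intro r hr _
    have hr' : r < 2 ^ n := Finset.mem_range.mp hr
    show 2 ^ n - 1 - r ≠ r
    intro heq
    omega
  · intro r hr
    have hr' : r < 2 ^ n := Finset.mem_range.mp hr
    show 2 ^ n - 1 - (2 ^ n - 1 - r) = r
    omega
  · intro r hr
    have hr' : r < 2 ^ n := Finset.mem_range.mp hr
    show 2 ^ n - 1 - r ∈ Finset.range (2 ^ n)
    exact Finset.mem_range.mpr (by omega)

lemma Phi_zero_left {p b n e0 e2 : ℕ} (h : cc p b n < e0) : Phi p b n e0 e2 = 0 := by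
  apply Finset.sum_eq_zero
  intro r _
  have : (cc p b n - mm p b n r).choose e0 = 0 :=
    Nat.choose_eq_zero_of_lt (lt_of_le_of_lt (Nat.sub_le _ _) h)
  rw [this]
  simp

lemma Phi_zero_right {p b n e0 e2 : ℕ} (h : cc p b n < e2) : Phi p b n e0 e2 = 0 := by
  apply Finset.sum_eq_zero
  intro r hr
  have : (mm p b n r).choose e2 = 0 :=
    Nat.choose_eq_zero_of_lt (lt_of_le_of_lt (mm_le_cc p b n r) h)
  rw [this]
  simp

lemma Phi_rec {p b n : ℕ} (hn : 1 ≤ n) (e0 e2 : ℕ) :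
    Phi p b (n + 1) e0 e2 =
      (∑ x ∈ Finset.HasAntidiagonal.antidiagonal e0, ((b * p ^ n).choose x.1 : ℤ) * Phi p b n x.2 e2) +
      ∑ x ∈ Finset.HasAntidiagonal.antidiagonal e2, ((b * p ^ n).choose x.1 : ℤ) * Phi p b n e0 x.2 := by
  have heven : Even ((2:ℕ) ^ n) := by
    rcases (dvd_pow_self 2 (show n ≠ 0 by omega)) with ⟨k, hk⟩
    exact ⟨k, by omega⟩
  unfold Phi
  rw [show (2:ℕ) ^ (n + 1) = 2 ^ n + 2 ^ n from by rw [pow_succ]; ring]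
  rw [Finset.sum_range_add]
  congr 1
  · -- low part
    calc (∑ r ∈ Finset.range (2 ^ n),
          (-1 : ℤ) ^ r * ((cc p b (n+1) - mm p b (n+1) r).choose e0 : ℤ) * ((mm p b (n+1) r).choose e2 : ℤ))
        = ∑ r ∈ Finset.range (2 ^ n), ∑ x ∈ Finset.HasAntidiagonal.antidiagonal e0,
            ((b * p ^ n).choose x.1 : ℤ) *
              ((-1 : ℤ) ^ r * ((cc p b n - mm p b n r).choose x.2 : ℤ) * ((mm p b n r).choose e2 : ℤ)) := by
          apply Finset.sum_congr rfl
          intro r hr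
          have hr' : r < 2 ^ n := Finset.mem_range.mp hr
          have hle := mm_le_cc p b n r
          rw [mm_low hr', show cc p b (n+1) - mm p b n r = b * p ^ n + (cc p b n - mm p b n r) from by
            rw [cc_succ]; omega]
          rw [Nat.add_choose_eq]
          push_cast
          rw [Finset.mul_sum, Finset.sum_mul]
          apply Finset.sum_congr rfl
          intro x _
          ring
      _ = ∑ x ∈ Finset.HasAntidiagonal.antidiagonal e0, ∑ r ∈ Finset.range (2 ^ n),
            ((b * p ^ n).choose x.1 : ℤ) *
              ((-1 : ℤ) ^ r * ((cc p b n - mm p b n r).choose x.2 : ℤ) * ((mm p b n r).choose e2 : ℤ)) :=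
          Finset.sum_comm
      _ = ∑ x ∈ Finset.HasAntidiagonal.antidiagonal e0, ((b * p ^ n).choose x.1 : ℤ) * Phi p b n x.2 e2 := by
          apply Finset.sum_congr rfl
          intro x _
          rw [← Finset.mul_sum]
          rfl
  · -- high part
    calc (∑ r ∈ Finset.range (2 ^ n),
          (-1 : ℤ) ^ (2 ^ n + r) * ((cc p b (n+1) - mm p b (n+1) (2 ^ n + r)).choose e0 : ℤ) *
            ((mm p b (n+1) (2 ^ n + r)).choose e2 : ℤ))
        = ∑ r ∈ Finset.range (2 ^ n), ∑ x ∈ Finset.HasAntidiagonal.antidiagonal e2,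
            ((b * p ^ n).choose x.1 : ℤ) *
              ((-1 : ℤ) ^ r * ((cc p b n - mm p b n r).choose e0 : ℤ) * ((mm p b n r).choose x.2 : ℤ)) := by
          apply Finset.sum_congr rfl
          intro r hr
          have hr' : r < 2 ^ n := Finset.mem_range.mp hr
          have hle := mm_le_cc p b n r
          rw [mm_high hr']
          rw [show cc p b (n+1) - (mm p b n r + b * p ^ n) = cc p b n - mm p b n r from by
            rw [cc_succ]; omega]
          rw [show mm p b n r + b * p ^ n = b * p ^ n + mm p b n r from by ring]
          rw [Nat.add_choose_eq]
          rw [pow_add, Even.neg_one_pow heven, one_mul]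
          push_cast
          rw [Finset.mul_sum]
          apply Finset.sum_congr rfl
          intro x _
          ring
      _ = ∑ x ∈ Finset.HasAntidiagonal.antidiagonal e2, ∑ r ∈ Finset.range (2 ^ n),
            ((b * p ^ n).choose x.1 : ℤ) *
              ((-1 : ℤ) ^ r * ((cc p b n - mm p b n r).choose e0 : ℤ) * ((mm p b n r).choose x.2 : ℤ)) :=
          Finset.sum_comm
      _ = ∑ x ∈ Finset.HasAntidiagonal.antidiagonal e2, ((b * p ^ n).choose x.1 : ℤ) * Phi p b n e0 x.2 := by
          apply Finset.sum_congr rfl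
          intro x _
          rw [← Finset.mul_sum]
          rfl

lemma key_val {p : ℕ} (hp : p.Prime) {N t u : ℕ} (ht : p ^ N ∣ t) (hu : u ≠ 0) :
    p ^ (N - padicValNat p u) ∣ t.choose u := by
  haveI : Fact p.Prime := ⟨hp⟩
  set s := padicValNat p u with hs
  rcases le_or_gt N s with hNs | hsN
  · rw [Nat.sub_eq_zero_of_le hNs]
    exact one_dvd _
  rcases Nat.eq_zero_or_pos t with rfl | hT
  · rw [Nat.choose_eq_zero_of_lt (Nat.pos_of_ne_zero hu)]
    exact dvd_zero _
  have hid : t * (t - 1).choose (u - 1) = t.choose u * u := by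
    have h1 := Nat.add_one_mul_choose_eq (t - 1) (u - 1)
    rw [show t - 1 + 1 = t from by omega, show u - 1 + 1 = u from by omega] at h1
    exact h1
  have h1 : p ^ N ∣ t.choose u * u := hid ▸ Dvd.dvd.mul_right ht _
  obtain ⟨u0, hu0⟩ : p ^ s ∣ u := pow_padicValNat_dvd
  have hpu0 : ¬ p ∣ u0 := by
    intro hd
    rcases hd with ⟨w, hw⟩
    have hdd : p ^ (padicValNat p u + 1) ∣ u := by
      rw [← hs]
      exact ⟨w, by rw [hu0, hw, pow_succ]; ring⟩
    exact pow_succ_padicValNat_not_dvd hu hdd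
  have h2 : p ^ s * p ^ (N - s) ∣ p ^ s * (t.choose u * u0) := by
    rw [← pow_add, show s + (N - s) = N from by omega]
    calc p ^ N ∣ t.choose u * u := h1
      _ = p ^ s * (t.choose u * u0) := by rw [hu0]; ring
  have h3 : p ^ (N - s) ∣ t.choose u * u0 :=
    (Nat.mul_dvd_mul_iff_left (Nat.pow_pos hp.pos)).mp h2
  have hcop : (p ^ (N - s)).Coprime u0 :=
    Nat.Coprime.pow_left _ (hp.coprime_iff_not_dvd.mpr hpu0)
  exact hcop.dvd_of_dvd_mul_right h3

lemma core {p b : ℕ} (hp : p.Prime) (hb : b < p) :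
    ∀ n, 1 ≤ n → ∀ v ≤ n, ∀ e0 e2 : ℕ,
      (p : ℤ) ^ v ∣ (e2 : ℤ) - (e0 : ℤ) → (p : ℤ) ^ v ∣ Phi p b n e0 e2 := by
  intro n hn'
  induction n, hn' using Nat.le_induction with
  | base =>
    intro v hv e0 e2 hdvd
    interval_cases v
    · simpa using one_dvd _
    · -- explicit computation of Phi p b 1
      have hPhi : Phi p b 1 e0 e2 =
          (b.choose e0 : ℤ) * (Nat.choose 0 e2 : ℤ) - (Nat.choose 0 e0 : ℤ) * (b.choose e2 : ℤ) := by
        unfold Phi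
        rw [show (2:ℕ) ^ 1 = 2 from rfl, Finset.sum_range_succ, Finset.sum_range_succ,
          Finset.sum_range_zero]
        have hm0 : mm p b 1 0 = 0 := by simp [mm]
        have hm1 : mm p b 1 1 = b := by simp [mm, Nat.testBit_one_zero]
        have hc : cc p b 1 = b := by simp [cc]
        rw [hm0, hm1, hc]
        simp
        ring
      rw [hPhi]
      rw [pow_one] at hdvd ⊢
      by_cases he : e0 = e2
      · subst he
        simp [mul_comm]
      rcases Nat.eq_zero_or_pos e0 with rfl | he0
      · rcases Nat.eq_zero_or_pos e2 with rfl | he2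
        · exact (he rfl).elim
        · -- e0 = 0, e2 > 0 : Phi = C(b,0)C(0,e2) - C(0,0)C(b,e2) = -C(b,e2)
          have hz : Nat.choose 0 e2 = 0 := Nat.choose_eq_zero_of_lt he2
          have hpd : (p:ℕ) ∣ e2 := by
            have : (p:ℤ) ∣ (e2:ℤ) := by simpa using hdvd
            exact_mod_cast this
          have : b < e2 := lt_of_lt_of_le hb (Nat.le_of_dvd he2 hpd)
          rw [hz, Nat.choose_eq_zero_of_lt this]
          simp
      · rcases Nat.eq_zero_or_pos e2 with rfl | he2
        · have hz : Nat.choose 0 e0 = 0 := Nat.choose_eq_zero_of_lt he0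
          have hpd : (p:ℕ) ∣ e0 := by
            have : (p:ℤ) ∣ (e0:ℤ) := by
              have := (dvd_neg).mpr hdvd
              simpa using this
            exact_mod_cast this
          have : b < e0 := lt_of_lt_of_le hb (Nat.le_of_dvd he0 hpd)
          rw [hz, Nat.choose_eq_zero_of_lt this]
          simp
        · rw [Nat.choose_eq_zero_of_lt he0, Nat.choose_eq_zero_of_lt he2]
          simp
  | succ n hn ih =>
    intro v hv e0 e2 hdvd
    rcases le_or_gt v n with hvn | hvn
    · -- recursive case
      rw [Phi_rec hn]
      apply dvd_add
      · apply Finset.dvd_sum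
        intro x hx
        obtain ⟨u, w⟩ := x
        have hxw : u + w = e0 := Finset.HasAntidiagonal.mem_antidiagonal.mp hx
        simp only
        have hwz : (w : ℤ) = (e0 : ℤ) - (u : ℤ) := by
          have : (u:ℤ) + w = e0 := by exact_mod_cast hxw
          linarith
        rcases Nat.eq_zero_or_pos u with rfl | hupos
        · have hwe : w = e0 := by omega
          rw [hwe]
          exact Dvd.dvd.mul_left (ih v hvn e0 e2 hdvd) _
        set s := padicValNat p u with hs
        have hpsu : (p:ℕ) ^ s ∣ u := pow_padicValNat_dvd
        have hpsuz : (p:ℤ) ^ s ∣ (u:ℤ) := by exact_mod_cast hpsu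
        rcases le_or_gt v s with hvs | hsv
        · -- p^v divides u
          have hdvd2 : (p:ℤ) ^ v ∣ (e2:ℤ) - (w:ℤ) := by
            rw [hwz, show (e2:ℤ) - ((e0:ℤ) - u) = ((e2:ℤ) - e0) + u from by ring]
            exact dvd_add hdvd ((pow_dvd_pow _ hvs).trans hpsuz)
          exact Dvd.dvd.mul_left (ih v hvn w e2 hdvd2) _
        · -- s < v ≤ n
          have hsn : s ≤ n := by omega
          have hkey : (p:ℕ) ^ (n - s) ∣ (b * p ^ n).choose u :=
            key_val hp (dvd_mul_left _ _) (by omega)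
          have hdvd2 : (p:ℤ) ^ s ∣ (e2:ℤ) - (w:ℤ) := by
            rw [hwz, show (e2:ℤ) - ((e0:ℤ) - u) = ((e2:ℤ) - e0) + u from by ring]
            exact dvd_add ((pow_dvd_pow _ (by omega : s ≤ v)).trans hdvd) hpsuz
          have hPhi : (p:ℤ) ^ s ∣ Phi p b n w e2 := ih s hsn w e2 hdvd2
          have hkeyz : (p:ℤ) ^ (n - s) ∣ ((b * p ^ n).choose u : ℤ) := by exact_mod_cast hkey
          have hmul : (p:ℤ) ^ (n - s) * (p:ℤ) ^ s ∣ ((b * p ^ n).choose u : ℤ) * Phi p b n w e2 :=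
            mul_dvd_mul hkeyz hPhi
          rw [← pow_add, show n - s + s = n from by omega] at hmul
          exact (pow_dvd_pow _ (by omega : v ≤ n)).trans hmul
      · apply Finset.dvd_sum
        intro x hx
        obtain ⟨u, w⟩ := x
        have hxw : u + w = e2 := Finset.HasAntidiagonal.mem_antidiagonal.mp hx
        simp only
        have hwz : (w : ℤ) = (e2 : ℤ) - (u : ℤ) := by
          have : (u:ℤ) + w = e2 := by exact_mod_cast hxw
          linarith
        rcases Nat.eq_zero_or_pos u with rfl | hupos
        · have hwe : w = e2 := by omega
          rw [hwe]
          exact Dvd.dvd.mul_left (ih v hvn e0 e2 hdvd) _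
        set s := padicValNat p u with hs
        have hpsu : (p:ℕ) ^ s ∣ u := pow_padicValNat_dvd
        have hpsuz : (p:ℤ) ^ s ∣ (u:ℤ) := by exact_mod_cast hpsu
        rcases le_or_gt v s with hvs | hsv
        · have hdvd2 : (p:ℤ) ^ v ∣ (w:ℤ) - (e0:ℤ) := by
            rw [hwz, show (e2:ℤ) - u - (e0:ℤ) = ((e2:ℤ) - e0) - u from by ring]
            exact dvd_sub hdvd ((pow_dvd_pow _ hvs).trans hpsuz)
          exact Dvd.dvd.mul_left (ih v hvn e0 w hdvd2) _
        · have hsn : s ≤ n := by omega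
          have hkey : (p:ℕ) ^ (n - s) ∣ (b * p ^ n).choose u :=
            key_val hp (dvd_mul_left _ _) (by omega)
          have hdvd2 : (p:ℤ) ^ s ∣ (w:ℤ) - (e0:ℤ) := by
            rw [hwz, show (e2:ℤ) - u - (e0:ℤ) = ((e2:ℤ) - e0) - u from by ring]
            exact dvd_sub ((pow_dvd_pow _ (by omega : s ≤ v)).trans hdvd) hpsuz
          have hPhi : (p:ℤ) ^ s ∣ Phi p b n e0 w := ih s hsn e0 w hdvd2
          have hkeyz : (p:ℤ) ^ (n - s) ∣ ((b * p ^ n).choose u : ℤ) := by exact_mod_cast hkey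
          have hmul : (p:ℤ) ^ (n - s) * (p:ℤ) ^ s ∣ ((b * p ^ n).choose u : ℤ) * Phi p b n e0 w :=
            mul_dvd_mul hkeyz hPhi
          rw [← pow_add, show n - s + s = n from by omega] at hmul
          exact (pow_dvd_pow _ (by omega : v ≤ n)).trans hmul
    · -- v = n + 1 : boundary case via antisymmetry
      have hv1 : v = n + 1 := by omega
      subst hv1
      rcases lt_or_ge (cc p b (n+1)) e0 with h0 | h0
      · rw [Phi_zero_left h0]; exact dvd_zero _
      rcases lt_or_ge (cc p b (n+1)) e2 with h2 | h2
      · rw [Phi_zero_right h2]; exact dvd_zero _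
      have hcc : cc p b (n+1) < p ^ (n+1) := cc_lt_pow hb (n+1)
      have habs : |(e2:ℤ) - (e0:ℤ)| < (p:ℤ) ^ (n+1) := by
        have h1 : ((cc p b (n+1) : ℤ)) < (p:ℤ) ^ (n+1) := by exact_mod_cast hcc
        have h2' : (e0:ℤ) ≤ (cc p b (n+1) : ℤ) := by exact_mod_cast h0
        have h3' : (e2:ℤ) ≤ (cc p b (n+1) : ℤ) := by exact_mod_cast h2
        have h4' : (0:ℤ) ≤ e0 := Int.natCast_nonneg e0
        have h5' : (0:ℤ) ≤ e2 := Int.natCast_nonneg e2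
        rw [abs_sub_lt_iff]
        constructor <;> linarith
      have hzero : (e2:ℤ) - (e0:ℤ) = 0 := Int.eq_zero_of_abs_lt_dvd hdvd habs
      have : e2 = e0 := by exact_mod_cast sub_eq_zero.mp hzero
      subst this
      rw [Phi_diag (by omega)]
      exact dvd_zero _

lemma perR {c m i k : ℕ} (hm : m ≤ c) (hi : i ≤ c) :
    (∑ e ∈ Finset.range (c + 1),
      if k ≤ e then m.choose e * e.choose i * (c - m).choose (e - k) else 0)
    = m.choose i * (if k ≤ m then (c - i).choose (m - k) else 0) := by
  by_cases hkm : k ≤ m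
  swap
  · rw [if_neg hkm, mul_zero]
    apply Finset.sum_eq_zero
    intro e _
    split
    · rename_i hke
      rw [Nat.choose_eq_zero_of_lt (by omega : m < e)]
      ring
    · rfl
  rw [if_pos hkm]
  by_cases him : i ≤ m
  swap
  · rw [Nat.choose_eq_zero_of_lt (by omega : m < i), zero_mul]
    apply Finset.sum_eq_zero
    intro e _
    split
    · rcases le_or_gt e m with hem | hem
      · rw [Nat.choose_eq_zero_of_lt (by omega : e < i)]
        ring
      · rw [Nat.choose_eq_zero_of_lt hem]
        ring
    · rfl
  -- main case : k ≤ m, i ≤ m ≤ c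
  have step1 : (∑ e ∈ Finset.range (c + 1),
      if k ≤ e then m.choose e * e.choose i * (c - m).choose (e - k) else 0)
      = ∑ e ∈ Finset.range (c + 1),
        if e ∈ Finset.Icc k m then m.choose i * ((m - i).choose (m - e) * (c - m).choose (e - k)) else 0 := by
    apply Finset.sum_congr rfl
    intro e _
    by_cases hya : k ≤ e ∧ e ≤ m
    · rw [if_pos hya.1, if_pos (Finset.mem_Icc.mpr hya)]
      rcases le_or_gt i e with hie | hie
      · have hchain : m.choose e * e.choose i = m.choose i * (m - i).choose (e - i) :=
          Nat.choose_mul hie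
        have hsymm : (m - i).choose (e - i) = (m - i).choose (m - e) := by
          rw [← Nat.choose_symm (by omega : e - i ≤ m - i)]
          congr 1
          omega
        rw [hchain, hsymm, mul_assoc]
      · rw [Nat.choose_eq_zero_of_lt hie,
          Nat.choose_eq_zero_of_lt (by omega : m - i < m - e)]
        ring
    · rw [if_neg (fun hmem => hya (Finset.mem_Icc.mp hmem))]
      rcases le_or_gt k e with hke | hke
      · rw [if_pos hke, Nat.choose_eq_zero_of_lt (by omega : m < e)]
        ring
      · rw [if_neg (by omega)]
  rw [step1, Finset.sum_ite_mem,
    Finset.inter_eq_right.mpr (by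
      intro e he
      have := Finset.mem_Icc.mp he
      exact Finset.mem_range.mpr (by omega)), ← Finset.mul_sum]
  congr 1
  -- reindex e = m - u
  have step2 : (∑ e ∈ Finset.Icc k m, (m - i).choose (m - e) * (c - m).choose (e - k))
      = ∑ u ∈ Finset.range (m - k + 1), (m - i).choose u * (c - m).choose (m - k - u) := by
    apply Finset.sum_bij' (fun e _ => m - e) (fun u _ => m - u)
    · intro e he
      have h := Finset.mem_Icc.mp he
      exact Finset.mem_range.mpr (by omega)
    · intro u hu
      have h := Finset.mem_range.mp hu
      exact Finset.mem_Icc.mpr (by omega)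
    · intro e he
      have h := Finset.mem_Icc.mp he
      omega
    · intro u hu
      have h := Finset.mem_range.mp hu
      omega
    · intro e he
      have h := Finset.mem_Icc.mp he
      rw [show m - k - (m - e) = e - k from by omega]
  rw [step2]
  -- Vandermonde
  have hv : c - i = (m - i) + (c - m) := by omega
  rw [hv, Nat.add_choose_eq, Finset.Nat.sum_antidiagonal_eq_sum_range_succ_mk]

lemma IDlemma {p b n i : ℕ} (hn : 1 ≤ n) (hi : i ≤ cc p b n) (u : ℕ) :
    (∑ r ∈ Finset.range (2 ^ n), (-1 : ℤ) ^ r * ((mm p b n r).choose i : ℤ) *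
      (if u ≤ mm p b n r then (((cc p b n - i).choose (mm p b n r - u) : ℕ) : ℤ) else 0))
    = ∑ e ∈ Finset.range (cc p b n + 1), (e.choose i : ℤ) *
        (if u ≤ e then Phi p b n (e - u) e else 0) := by
  have hR : ∀ e, (e.choose i : ℤ) * (if u ≤ e then Phi p b n (e - u) e else 0)
      = ∑ r ∈ Finset.range (2 ^ n), (-1:ℤ)^r *
          (if u ≤ e then ((cc p b n - mm p b n r).choose (e - u) : ℤ) *
            ((mm p b n r).choose e : ℤ) * (e.choose i : ℤ) else 0) := by
    intro e
    by_cases hue : u ≤ e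
    · rw [if_pos hue]
      unfold Phi
      rw [Finset.mul_sum]
      apply Finset.sum_congr rfl
      intro r _
      rw [if_pos hue]
      ring
    · rw [if_neg hue]
      simp [if_neg hue]
  rw [Finset.sum_congr rfl (fun e _ => hR e), Finset.sum_comm]
  symm
  apply Finset.sum_congr rfl
  intro r _
  have hmc : mm p b n r ≤ cc p b n := mm_le_cc p b n r
  have hnat := perR (c := cc p b n) (m := mm p b n r) (i := i) (k := u) hmc hi
  calc (∑ e ∈ Finset.range (cc p b n + 1), (-1:ℤ)^r *
          (if u ≤ e then ((cc p b n - mm p b n r).choose (e - u) : ℤ) *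
            ((mm p b n r).choose e : ℤ) * (e.choose i : ℤ) else 0))
      = (-1:ℤ)^r * (((∑ e ∈ Finset.range (cc p b n + 1),
          if u ≤ e then (mm p b n r).choose e * e.choose i *
            (cc p b n - mm p b n r).choose (e - u) else 0) : ℕ) : ℤ) := by
        rw [Nat.cast_sum, Finset.mul_sum]
        apply Finset.sum_congr rfl
        intro e _
        rw [apply_ite (fun x : ℕ => (x : ℤ))]
        push_cast
        split_ifs <;> ring
    _ = (-1 : ℤ) ^ r * ((mm p b n r).choose i : ℤ) *
          (if u ≤ mm p b n r then (((cc p b n - i).choose (mm p b n r - u) : ℕ) : ℤ) else 0) := by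
        rw [hnat]
        push_cast [apply_ite (fun x : ℕ => (x : ℤ))]
        split_ifs <;> ring

end Stmt1Aux

/-- For a prime `p`, `1 ≤ b ≤ p-1`, `n ≥ 1`, `a ≥ n`, `i ≥ 0`:
`∑_{r=0}^{2^n-1} (-1)^r C(m(r),i) C(m(2^a-1)-i, m(r)) ≡ 0 (mod p^n)`. -/
theorem stmt1 (p b n a i : ℕ) (hp : p.Prime) (hb1 : 1 ≤ b) (hb2 : b ≤ p - 1)
    (hn : 1 ≤ n) (ha : n ≤ a) :
    (p ^ n : ℤ) ∣ ∑ r ∈ Finset.range (2 ^ n),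
      (-1 : ℤ) ^ r * ((digitSub p b r).choose i : ℤ) *
        ((digitSub p b (2 ^ a - 1) - i).choose (digitSub p b r) : ℤ) := by
  classical
  open Stmt1Aux in
  have hp2 := hp.two_le
  have hb : b < p := by omega
  have hpowa : (0:ℕ) < 2 ^ a := Nat.pow_pos (by norm_num)
  have hM : digitSub p b (2 ^ a - 1) = Stmt1Aux.cc p b a := by
    rw [Stmt1Aux.digitSub_eq_mm (by omega : 2 ^ a - 1 < 2 ^ a), Stmt1Aux.mm_top]
  by_cases hic : Stmt1Aux.cc p b n < i
  · have hz : ∀ r ∈ Finset.range (2 ^ n),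
        (-1 : ℤ) ^ r * ((digitSub p b r).choose i : ℤ) *
          ((digitSub p b (2 ^ a - 1) - i).choose (digitSub p b r) : ℤ) = 0 := by
      intro r hr
      have hr' : r < 2 ^ n := Finset.mem_range.mp hr
      rw [Stmt1Aux.digitSub_eq_mm hr',
        Nat.choose_eq_zero_of_lt (lt_of_le_of_lt (Stmt1Aux.mm_le_cc p b n r) hic)]
      push_cast
      ring
    rw [Finset.sum_congr rfl hz]
    simp
  push_neg at hic
  set c := Stmt1Aux.cc p b n with hc
  set T := ∑ j ∈ Finset.Ico n a, b * p ^ j with hTdef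
  have hcaT : Stmt1Aux.cc p b a = c + T := by
    rw [hc, hTdef]
    unfold Stmt1Aux.cc
    rw [Finset.range_eq_Ico, ← Finset.sum_Ico_consecutive (fun j => b * p ^ j) (Nat.zero_le n) ha,
      ← Finset.range_eq_Ico]
  have hTd : (p:ℕ) ^ n ∣ T := by
    apply Finset.dvd_sum
    intro j hj
    exact ((pow_dvd_pow p (Finset.mem_Ico.mp hj).1).mul_left b)
  have hstep : (∑ r ∈ Finset.range (2 ^ n),
      (-1 : ℤ) ^ r * ((digitSub p b r).choose i : ℤ) *
        ((digitSub p b (2 ^ a - 1) - i).choose (digitSub p b r) : ℤ))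
      = ∑ u ∈ Finset.range (c + 1), (T.choose u : ℤ) *
          (∑ r ∈ Finset.range (2 ^ n), (-1 : ℤ) ^ r * ((Stmt1Aux.mm p b n r).choose i : ℤ) *
            (if u ≤ Stmt1Aux.mm p b n r then
              (((c - i).choose (Stmt1Aux.mm p b n r - u) : ℕ) : ℤ) else 0)) := by
    calc (∑ r ∈ Finset.range (2 ^ n),
        (-1 : ℤ) ^ r * ((digitSub p b r).choose i : ℤ) *
          ((digitSub p b (2 ^ a - 1) - i).choose (digitSub p b r) : ℤ))
        = ∑ r ∈ Finset.range (2 ^ n), ∑ u ∈ Finset.range (c + 1),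
            (T.choose u : ℤ) * ((-1 : ℤ) ^ r * ((Stmt1Aux.mm p b n r).choose i : ℤ) *
              (if u ≤ Stmt1Aux.mm p b n r then
                (((c - i).choose (Stmt1Aux.mm p b n r - u) : ℕ) : ℤ) else 0)) := by
          apply Finset.sum_congr rfl
          intro r hr
          have hr' : r < 2 ^ n := Finset.mem_range.mp hr
          have hmc : Stmt1Aux.mm p b n r ≤ c := Stmt1Aux.mm_le_cc p b n r
          rw [Stmt1Aux.digitSub_eq_mm hr', hM]
          rw [show Stmt1Aux.cc p b a - i = T + (c - i) from by omega]
          rw [Nat.add_choose_eq, Finset.Nat.sum_antidiagonal_eq_sum_range_succ_mk]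
          have e1 : (∑ x ∈ Finset.range (Stmt1Aux.mm p b n r + 1),
              T.choose x * (c - i).choose (Stmt1Aux.mm p b n r - x))
              = ∑ x ∈ Finset.range (Stmt1Aux.mm p b n r + 1),
                if x ≤ Stmt1Aux.mm p b n r then
                  T.choose x * (c - i).choose (Stmt1Aux.mm p b n r - x) else 0 := by
            apply Finset.sum_congr rfl
            intro x hx
            rw [if_pos (by have := Finset.mem_range.mp hx; omega)]
          have e2 : (∑ x ∈ Finset.range (Stmt1Aux.mm p b n r + 1),
                if x ≤ Stmt1Aux.mm p b n r then
                  T.choose x * (c - i).choose (Stmt1Aux.mm p b n r - x) else 0)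
              = ∑ x ∈ Finset.range (c + 1),
                if x ≤ Stmt1Aux.mm p b n r then
                  T.choose x * (c - i).choose (Stmt1Aux.mm p b n r - x) else 0 := by
            apply Finset.sum_subset (Finset.range_subset_range.mpr (by omega))
            intro x _ hx
            rw [if_neg (by
              intro hle
              exact hx (Finset.mem_range.mpr (by omega)))]
          rw [e1, e2, Nat.cast_sum, Finset.mul_sum]
          apply Finset.sum_congr rfl
          intro x _
          rw [apply_ite (fun y : ℕ => (y : ℤ))]
          push_cast
          split_ifs <;> ring
      _ = _ := by
          rw [Finset.sum_comm]
          apply Finset.sum_congr rfl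
          intro u _
          rw [Finset.mul_sum]
  rw [hstep]
  apply Finset.dvd_sum
  intro u hu
  have huc : u ≤ c := by have := Finset.mem_range.mp hu; omega
  rcases Nat.eq_zero_or_pos u with rfl | hupos
  · have hW : (∑ r ∈ Finset.range (2 ^ n), (-1 : ℤ) ^ r * ((Stmt1Aux.mm p b n r).choose i : ℤ) *
        (if 0 ≤ Stmt1Aux.mm p b n r then
          (((c - i).choose (Stmt1Aux.mm p b n r - 0) : ℕ) : ℤ) else 0)) = 0 := by
      rw [Stmt1Aux.IDlemma hn hic 0]
      apply Finset.sum_eq_zero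
      intro e _
      rw [if_pos (Nat.zero_le e), Nat.sub_zero, Stmt1Aux.Phi_diag hn]
      ring
    rw [hW, mul_zero]
    exact dvd_zero _
  · set s := padicValNat p u with hsdef
    have hclt : c < p ^ n := Stmt1Aux.cc_lt_pow hb n
    have hsu : (p:ℕ) ^ s ∣ u := pow_padicValNat_dvd
    have hsn : s < n := by
      by_contra hcon
      push_neg at hcon
      have h1 : (p:ℕ) ^ n ≤ p ^ s := Nat.pow_le_pow_right (by omega) hcon
      have h2 : (p:ℕ) ^ s ≤ u := Nat.le_of_dvd hupos hsu
      omega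
    have h1 : (p:ℕ) ^ (n - s) ∣ T.choose u := Stmt1Aux.key_val hp hTd (by omega)
    have h2 : (p:ℤ) ^ s ∣ (∑ r ∈ Finset.range (2 ^ n),
        (-1 : ℤ) ^ r * ((Stmt1Aux.mm p b n r).choose i : ℤ) *
          (if u ≤ Stmt1Aux.mm p b n r then
            (((c - i).choose (Stmt1Aux.mm p b n r - u) : ℕ) : ℤ) else 0)) := by
      rw [Stmt1Aux.IDlemma hn hic u]
      apply Finset.dvd_sum
      intro e _
      by_cases hue : u ≤ e
      · rw [if_pos hue]
        apply Dvd.dvd.mul_left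
        apply Stmt1Aux.core hp hb n hn s (le_of_lt hsn) (e - u) e
        rw [show ((e - u : ℕ) : ℤ) = (e : ℤ) - (u : ℤ) from by
          rw [Int.ofNat_sub hue]]
        rw [show (e : ℤ) - ((e : ℤ) - (u : ℤ)) = (u : ℤ) from by ring]
        exact_mod_cast hsu
      · rw [if_neg hue]
        simp
    have h1z : (p:ℤ) ^ (n - s) ∣ (T.choose u : ℤ) := by exact_mod_cast h1
    have hmul := mul_dvd_mul h1z h2
    rw [← pow_add, show n - s + s = n from by omega] at hmul
    exact hmul
end

section
/- For any integer m ≥ 0 and the polynomial F_m(t) = ∑_{i=0}^m C(m,i) C(m−1/2,i) t^i, we have the identity F_m(1 − t) = ∑_{i=0}^m (−1)^i · C(m,i) · C(−1/2 − i, m) · t^{m−i} as polynomials in Q[t]. -/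
open Polynomial

/-- Generalized binomial coefficient `C(x,k) = x(x-1)⋯(x-k+1)/k!` for rational `x`. -/
noncomputable def gchoose (x : ℚ) (k : ℕ) : ℚ :=
  (∏ j ∈ Finset.range k, (x - j)) / (k.factorial : ℚ)

/-- The hypergeometric polynomial `F_m(t) = ∑_{i=0}^m C(m,i) C(m-1/2,i) t^i`. -/
noncomputable def Fhyp (m : ℕ) : Polynomial ℚ :=
  ∑ i ∈ Finset.range (m + 1),
    C ((m.choose i : ℚ) * gchoose ((m : ℚ) - 1/2) i) * X ^ i

lemma gchoose_zero (x : ℚ) : gchoose x 0 = 1 := by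
  simp [gchoose]

lemma gchoose_pascal (x : ℚ) (k : ℕ) :
    gchoose (x + 1) (k + 1) = gchoose x (k + 1) + gchoose x k := by
  have hfac : ((k + 1).factorial : ℚ) = (k + 1) * k.factorial := by
    push_cast [Nat.factorial_succ]; ring
  have h1 : ∏ j ∈ Finset.range (k + 1), (x + 1 - j) =
      (x + 1) * ∏ j ∈ Finset.range k, (x - j) := by
    rw [Finset.prod_range_succ']
    simp only [Nat.cast_zero, sub_zero, Nat.cast_add, Nat.cast_one]
    rw [mul_comm]
    congr 1
    apply Finset.prod_congr rfl
    intro j _; ring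
  have h2 : ∏ j ∈ Finset.range (k + 1), (x - j) =
      (∏ j ∈ Finset.range k, (x - j)) * (x - k) := Finset.prod_range_succ _ _
  have hk0 : (k.factorial : ℚ) ≠ 0 := by exact_mod_cast k.factorial_ne_zero
  have hk1 : ((k:ℚ) + 1) ≠ 0 := by positivity
  rw [gchoose, gchoose, gchoose, h1, h2, hfac]
  field_simp
  ring

lemma gchoose_vandermonde (x : ℚ) (n k : ℕ) :
    gchoose (x + n) k = ∑ s ∈ Finset.range (k + 1), (n.choose s : ℚ) * gchoose x (k - s) := by
  induction n generalizing k with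
  | zero =>
    rw [Finset.sum_eq_single 0]
    · simp
    · intro s _ hs
      rcases Nat.exists_eq_succ_of_ne_zero hs with ⟨t, rfl⟩
      simp
    · simp
  | succ n ih =>
    cases k with
    | zero => simp [gchoose_zero]
    | succ k =>
      have key : gchoose (x + (n + 1 : ℕ)) (k + 1) =
          gchoose (x + n) (k + 1) + gchoose (x + n) k := by
        have := gchoose_pascal (x + n) k
        rw [← this]; push_cast; ring_nf
      rw [key, ih (k + 1), ih k]
      rw [Finset.sum_range_succ' (fun s => ((n+1).choose s : ℚ) * gchoose x (k + 1 - s)),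
        Finset.sum_range_succ' (fun s => (n.choose s : ℚ) * gchoose x (k + 1 - s))]
      simp only [Nat.choose_succ_succ, Nat.succ_eq_add_one, Nat.cast_add,
        Nat.succ_sub_succ_eq_sub, Nat.choose_zero_right, Nat.cast_one, Nat.sub_zero, one_mul]
      have hsplit : ∑ s ∈ Finset.range (k + 1),
          ((n.choose s : ℚ) + (n.choose (s + 1) : ℚ)) * gchoose x (k - s)
          = (∑ s ∈ Finset.range (k + 1), (n.choose s : ℚ) * gchoose x (k - s))
          + ∑ s ∈ Finset.range (k + 1), (n.choose (s + 1) : ℚ) * gchoose x (k - s) := by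
        rw [← Finset.sum_add_distrib]
        exact Finset.sum_congr rfl fun s _ => by ring
      rw [hsplit]
      ring

lemma gchoose_reflect (x : ℚ) (m : ℕ) :
    gchoose x m = (-1 : ℚ) ^ m * gchoose ((m : ℚ) - 1 - x) m := by
  rw [gchoose, gchoose, ← Finset.prod_range_reflect (fun j => ((m:ℚ) - 1 - x - j)) m]
  have : ∏ j ∈ Finset.range m, ((m:ℚ) - 1 - x - ((m - 1 - j : ℕ) : ℚ)) =
      ∏ j ∈ Finset.range m, (-(x - j)) := by
    apply Finset.prod_congr rfl
    intro j hj
    have hj' : j < m := Finset.mem_range.mp hj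
    have : ((m - 1 - j : ℕ) : ℚ) = (m : ℚ) - 1 - j := by
      have : m - 1 - j = m - (1 + j) := by omega
      rw [this]
      have h1j : 1 + j ≤ m := by omega
      push_cast [Nat.cast_sub h1j]
      ring
    rw [this]; ring
  rw [this]
  have h2 : ∏ j ∈ Finset.range m, (-(x - (j : ℚ))) =
      (-1 : ℚ) ^ m * ∏ j ∈ Finset.range m, (x - (j : ℚ)) := by
    rw [show (fun j : ℕ => -(x - (j : ℚ))) = fun j : ℕ => (-1) * (x - (j : ℚ)) from
      funext fun j => by ring]
    rw [Finset.prod_mul_distrib, Finset.prod_const, Finset.card_range]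
  rw [h2, ← mul_div_assoc, ← mul_assoc, ← mul_pow]
  norm_num

lemma one_sub_X_pow (i : ℕ) :
    ((1 : ℚ[X]) - X) ^ i =
      ∑ j ∈ Finset.range (i + 1), C ((-1 : ℚ) ^ j * (i.choose j : ℚ)) * X ^ j := by
  have : ((1 : ℚ[X]) - X) = (-X) + 1 := by ring
  rw [this, add_pow]
  apply Finset.sum_congr rfl
  intro j _
  rw [neg_pow]
  simp [C_pow, mul_comm, mul_assoc, mul_left_comm]

lemma nat_choose_id {m i j : ℕ} (hi : i ≤ m) (hj : j ≤ m) :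
    m.choose i * i.choose j = m.choose j * (m - j).choose (m - i) := by
  by_cases hji : j ≤ i
  · rw [Nat.choose_mul hji]
    congr 1
    rw [← Nat.choose_symm (by omega : i - j ≤ m - j)]
    congr 1
    omega
  · rw [Nat.choose_eq_zero_of_lt (show i < j by omega),
      Nat.choose_eq_zero_of_lt (show m - j < m - i by omega)]
    simp

lemma key_scalar (m j : ℕ) (hj : j ≤ m) :
    ∑ i ∈ Finset.range (m + 1),
      (m.choose i : ℚ) * gchoose ((m : ℚ) - 1/2) i * ((-1 : ℚ) ^ j * (i.choose j : ℚ))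
    = (-1 : ℚ) ^ (m - j) * (m.choose (m - j) : ℚ) * gchoose (-1/2 - ((m - j : ℕ) : ℚ)) m := by
  have step1 : ∀ i ∈ Finset.range (m + 1),
      (m.choose i : ℚ) * gchoose ((m : ℚ) - 1/2) i * ((-1 : ℚ) ^ j * (i.choose j : ℚ)) =
      ((-1:ℚ)^j * (m.choose j : ℚ)) *
        (((m - j).choose (m - i) : ℚ) * gchoose ((m : ℚ) - 1/2) i) := by
    intro i hi
    have hi' : i ≤ m := Nat.lt_succ_iff.mp (Finset.mem_range.mp hi)
    have := nat_choose_id hi' hj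
    have hcast : (m.choose i : ℚ) * (i.choose j : ℚ) =
        (m.choose j : ℚ) * ((m - j).choose (m - i) : ℚ) := by exact_mod_cast congrArg Nat.cast this
    linear_combination ((-1 : ℚ) ^ j * gchoose ((m : ℚ) - 1/2) i) * hcast
  rw [Finset.sum_congr rfl step1, ← Finset.mul_sum]
  have step2 : ∑ i ∈ Finset.range (m + 1),
      ((m - j).choose (m - i) : ℚ) * gchoose ((m : ℚ) - 1/2) i =
      ∑ i ∈ Finset.range (m + 1),
      ((m - j).choose i : ℚ) * gchoose ((m : ℚ) - 1/2) (m - i) := by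
    rw [← Finset.sum_range_reflect (fun i => ((m - j).choose i : ℚ) * gchoose ((m : ℚ) - 1/2) (m - i)) (m+1)]
    apply Finset.sum_congr rfl
    intro i hi
    have hi' : i ≤ m := Nat.lt_succ_iff.mp (Finset.mem_range.mp hi)
    have h1 : m + 1 - 1 - i = m - i := by omega
    have h2 : m - (m - i) = i := by omega
    rw [h1, h2]
  rw [step2, ← gchoose_vandermonde ((m : ℚ) - 1/2) (m - j) m]
  have hx : (m : ℚ) - 1/2 + ((m - j : ℕ) : ℚ) = (m : ℚ) - 1 - (-1/2 - ((m - j : ℕ) : ℚ)) := by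
    ring
  have hrefl : gchoose ((m : ℚ) - 1 - (-1/2 - ((m - j : ℕ) : ℚ))) m =
      (-1 : ℚ) ^ m * gchoose (-1/2 - ((m - j : ℕ) : ℚ)) m := by
    rw [gchoose_reflect ((m : ℚ) - 1 - (-1/2 - ((m - j : ℕ) : ℚ))) m]
    have harg : (m : ℚ) - 1 - ((m : ℚ) - 1 - (-1/2 - ((m - j : ℕ) : ℚ))) =
        -1/2 - ((m - j : ℕ) : ℚ) := by ring
    rw [harg]
  rw [hx, hrefl, Nat.choose_symm hj]
  have hm : m = (m - j) + j := by omega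
  have hsign : (-1 : ℚ) ^ (m - j) = (-1 : ℚ) ^ m * (-1 : ℚ) ^ j :=
    calc (-1 : ℚ) ^ (m - j) = (-1 : ℚ) ^ (m - j) * ((-1 : ℚ) ^ j * (-1 : ℚ) ^ j) := by
          rw [← mul_pow]; norm_num
      _ = (-1 : ℚ) ^ ((m - j) + j) * (-1 : ℚ) ^ j := by rw [pow_add]; ring
      _ = (-1 : ℚ) ^ m * (-1 : ℚ) ^ j := by rw [← hm]
  rw [hsign]
  ring

/-- `F_m(1-t) = ∑_{i=0}^m (-1)^i C(m,i) C(-1/2-i, m) t^{m-i}` in `ℚ[t]`. -/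
theorem stmt5 (m : ℕ) :
    (Fhyp m).comp (1 - X) =
      ∑ i ∈ Finset.range (m + 1),
        C ((-1 : ℚ) ^ i * (m.choose i : ℚ) * gchoose (-1/2 - (i : ℚ)) m) *
          X ^ (m - i) := by
  rw [Fhyp, Polynomial.sum_comp]
  simp only [mul_comp, C_comp, pow_comp, X_comp, one_sub_X_pow]
  have hext : ∀ i ∈ Finset.range (m + 1),
      C ((m.choose i : ℚ) * gchoose ((m : ℚ) - 1/2) i) *
        ∑ j ∈ Finset.range (i + 1), C ((-1 : ℚ) ^ j * (i.choose j : ℚ)) * X ^ j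
      = ∑ j ∈ Finset.range (m + 1),
          C ((m.choose i : ℚ) * gchoose ((m : ℚ) - 1/2) i *
            ((-1 : ℚ) ^ j * (i.choose j : ℚ))) * X ^ j := by
    intro i hi
    have hi' : i + 1 ≤ m + 1 := Finset.mem_range.mp hi
    rw [Finset.mul_sum]
    have h1 : ∀ j ∈ Finset.range (i + 1),
        C ((m.choose i : ℚ) * gchoose ((m : ℚ) - 1/2) i) *
          (C ((-1 : ℚ) ^ j * (i.choose j : ℚ)) * X ^ j) =
        C ((m.choose i : ℚ) * gchoose ((m : ℚ) - 1/2) i *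
          ((-1 : ℚ) ^ j * (i.choose j : ℚ))) * X ^ j := by
      intro j _
      rw [← mul_assoc, ← C_mul]
    rw [Finset.sum_congr rfl h1]
    apply Finset.sum_subset (Finset.range_subset_range.mpr hi')
    intro j hjm hj
    have : i < j := by
      by_contra h
      exact hj (Finset.mem_range.mpr (by omega))
    rw [Nat.choose_eq_zero_of_lt this]
    simp
  rw [Finset.sum_congr rfl hext, Finset.sum_comm]
  rw [← Finset.sum_range_reflect
    (fun i => C ((-1 : ℚ) ^ i * (m.choose i : ℚ) * gchoose (-1/2 - (i : ℚ)) m) * X ^ (m - i)) (m + 1)]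
  apply Finset.sum_congr rfl
  intro j hj
  have hj' : j ≤ m := Nat.lt_succ_iff.mp (Finset.mem_range.mp hj)
  have h1 : m + 1 - 1 - j = m - j := by omega
  have h2 : m - (m - j) = j := by omega
  simp only [h1, h2]
  rw [← Finset.sum_mul, ← map_sum C _ (Finset.range (m + 1))]
  rw [key_scalar m j hj']
end

section
/- Let p be a prime. For n ≥ 0 define the p-deprived factorial n!_p = ∏_{1 ≤ i ≤ n, p ∤ i} i, and t_j(n) = ⌊n/p^j⌋, t_{j,l}(n) = t_j(n) mod p^l. Then for all n, j, l ≥ 0: t_j(n)! / (t_{j+1}(n)! · p^{t_{j+1}(n)}) = t_j(n)!_p, and t_j(n)!_p ≡ δ^{t_{j+l}(n)} · t_{j,l}(n)!_p (mod p^l), where δ = 1 if p = 2 and l ≥ 3, and δ = −1 otherwise. -/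
/-- The `p`-deprived factorial `n!_p = ∏_{1 ≤ i ≤ n, p ∤ i} i`. -/
def pDeprivedFactorial (p n : ℕ) : ℕ :=
  ∏ i ∈ Finset.Icc 1 n, if p ∣ i then 1 else i

lemma pdf_succ (p m : ℕ) :
    pDeprivedFactorial p (m + 1) =
      pDeprivedFactorial p m * (if p ∣ m + 1 then 1 else m + 1) := by
  unfold pDeprivedFactorial
  rw [Finset.prod_Icc_succ_top (by omega)]

lemma part1 (p : ℕ) (hp : p.Prime) : ∀ m : ℕ,
    m.factorial = pDeprivedFactorial p m * (m / p).factorial * p ^ (m / p) := by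
  intro m
  induction m with
  | zero => simp [pDeprivedFactorial]
  | succ m ih =>
    rw [Nat.factorial_succ, ih, pdf_succ, Nat.succ_div]
    by_cases h : p ∣ m + 1
    · simp only [h, if_pos, mul_one]
      have h2 : (m + 1) / p = m / p + 1 := by rw [Nat.succ_div, if_pos h]
      have key : (m / p + 1) * p = m + 1 := by
        have h3 := Nat.div_mul_cancel h
        rw [h2] at h3; exact h3
      rw [Nat.factorial_succ (m / p), pow_succ, ← key]
      ring
    · simp only [h, if_neg, not_false_iff, add_zero]
      ring


lemma prod_range_periodic {M : Type*} [CommMonoid M] (g : ℕ → M) (T : ℕ)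
    (hg : ∀ i, g (i + T) = g i) :
    ∀ q r, ∏ i ∈ Finset.range (q * T + r), g i =
      (∏ i ∈ Finset.range T, g i) ^ q * ∏ i ∈ Finset.range r, g i := by
  intro q
  induction q with
  | zero => simp
  | succ q ih =>
    intro r
    have h1 : (q + 1) * T + r = T + (q * T + r) := by ring
    rw [h1, Finset.prod_range_add]
    have h2 : ∀ i, g (T + i) = g i := fun i => by rw [Nat.add_comm]; exact hg i
    simp only [h2]
    rw [ih r, pow_succ, mul_left_comm, mul_assoc]

lemma cast_val_int {N : ℕ} [NeZero N] (x : ZMod N) :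
    (((x.val : ℤ)) : ZMod N) = x := by
  push_cast; rw [ZMod.natCast_val, ZMod.cast_id]

lemma dvd_of_sq (N : ℕ) [NeZero N] (x : ZMod N) (hx : x * x = 1) :
    (N : ℤ) ∣ ((x.val : ℤ) - 1) * ((x.val : ℤ) + 1) := by
  have : ((((x.val : ℤ) - 1) * ((x.val : ℤ) + 1) : ℤ) : ZMod N) = 0 := by
    push_cast
    rw [ZMod.natCast_val, ZMod.cast_id]
    linear_combination hx
  exact (ZMod.intCast_zmod_eq_zero_iff_dvd _ N).mp this

-- square roots of 1, odd p
lemma sq_cases_odd (p l : ℕ) (hp : p.Prime) (hodd : p ≠ 2) (x : ZMod (p ^ l))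
    (hx : x * x = 1) : x = 1 ∨ x = -1 := by
  haveI : NeZero (p ^ l) := ⟨pow_ne_zero l hp.ne_zero⟩
  set a : ℤ := (x.val : ℤ) with ha
  have hdvd : ((p : ℤ) ^ l) ∣ (a - 1) * (a + 1) := by
    have := dvd_of_sq (p ^ l) x hx
    push_cast at this ⊢
    exact this
  have hp' : Prime (p : ℤ) := Nat.prime_iff_prime_int.mp hp
  have hnot : ¬ ((p : ℤ) ∣ (a - 1) ∧ (p : ℤ) ∣ (a + 1)) := by
    rintro ⟨h1, h2⟩
    have : (p : ℤ) ∣ 2 := by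
      have := dvd_sub h2 h1
      simpa using this
    have hple : p ∣ 2 := by exact_mod_cast this
    exact hodd ((Nat.prime_dvd_prime_iff_eq hp Nat.prime_two).mp hple)
  have key : ∀ b c : ℤ, ¬ (p : ℤ) ∣ c → ((p : ℤ) ^ l) ∣ b * c → ((p : ℤ) ^ l) ∣ b := by
    intro b c hc hbc
    have hco : IsCoprime ((p : ℤ) ^ l) c :=
      ((Prime.coprime_iff_not_dvd hp').mpr hc).pow_left
    exact hco.dvd_of_dvd_mul_right hbc
  rcases not_and_or.mp hnot with h | h
  · right
    have : ((p : ℤ) ^ l) ∣ (a + 1) := by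
      apply key _ (a - 1) h
      rw [mul_comm] at hdvd; exact hdvd
    have h0 : ((a + 1 : ℤ) : ZMod (p ^ l)) = 0 := by
      rw [ZMod.intCast_zmod_eq_zero_iff_dvd]
      push_cast
      exact this
    rw [ha] at h0
    push_cast at h0
    rw [ZMod.natCast_val, ZMod.cast_id] at h0
    linear_combination h0
  · left
    have : ((p : ℤ) ^ l) ∣ (a - 1) := key _ (a + 1) h hdvd
    have h0 : ((a - 1 : ℤ) : ZMod (p ^ l)) = 0 := by
      rw [ZMod.intCast_zmod_eq_zero_iff_dvd]
      push_cast
      exact this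
    rw [ha] at h0
    push_cast at h0
    rw [ZMod.natCast_val, ZMod.cast_id] at h0
    linear_combination h0

lemma sq_cases_two (l : ℕ) (hl : 3 ≤ l) (x : ZMod (2 ^ l)) (hx : x * x = 1) :
    x = 1 ∨ x = -1 ∨ x = ((2 ^ (l - 1) : ℕ) : ZMod (2 ^ l)) + 1 ∨
      x = ((2 ^ (l - 1) : ℕ) : ZMod (2 ^ l)) - 1 := by
  haveI : NeZero (2 ^ l) := ⟨pow_ne_zero l two_ne_zero⟩
  set c : ZMod (2 ^ l) := ((2 ^ (l - 1) : ℕ) : ZMod (2 ^ l)) with hc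
  set a : ℤ := (x.val : ℤ) with ha
  have hxa : ((a : ℤ) : ZMod (2 ^ l)) = x := by
    rw [ha]; push_cast; rw [ZMod.natCast_val, ZMod.cast_id]
  have h2l : (((2 : ℤ) ^ l) : ZMod (2 ^ l)) = 0 := by
    have := ZMod.natCast_self (2 ^ l)
    exact_mod_cast this
  have h2l' : ((2 : ZMod (2 ^ l)) ^ l) = 0 := by exact_mod_cast h2l
  have hC : (((2 : ℤ) ^ (l - 1)) : ZMod (2 ^ l)) = c := by
    rw [hc]; push_cast; ring
  have e2 : (2 : ℤ) ^ l = 2 ^ (l - 1) * 2 := by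
    rw [← pow_succ]; congr 1; omega
  have hdvd : ((2 : ℤ) ^ l) ∣ (a - 1) * (a + 1) := by
    have := dvd_of_sq (2 ^ l) x hx
    rw [← ha] at this
    push_cast at this ⊢
    exact this
  have final : ∀ ε : ℤ, ((2 : ℤ) ^ (l - 1)) ∣ (a - ε) →
      x = ((ε : ℤ) : ZMod (2 ^ l)) ∨ x = c + ((ε : ℤ) : ZMod (2 ^ l)) := by
    intro ε hdiv
    obtain ⟨t, ht⟩ := hdiv
    rcases Int.even_or_odd t with ⟨m, hm⟩ | ⟨m, hm⟩
    · left
      have h0 : ((a - ε : ℤ) : ZMod (2 ^ l)) = 0 := by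
        have key : a - ε = 2 ^ l * m := by rw [ht, hm, e2]; ring
        rw [key]; push_cast; rw [h2l']; ring
      push_cast at h0
      rw [hxa] at h0
      linear_combination h0
    · right
      have h0 : ((a - ε - 2 ^ (l - 1) : ℤ) : ZMod (2 ^ l)) = 0 := by
        have key : a - ε - 2 ^ (l - 1) = 2 ^ l * m := by rw [ht, hm, e2]; ring
        rw [key]; push_cast; rw [h2l']; ring
      push_cast at h0
      rw [hxa] at h0
      rw [show ((2 : ZMod (2 ^ l)) ^ (l - 1)) = c from by exact_mod_cast hC] at h0
      linear_combination h0
  -- a is odd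
  have h2 : (2 : ℤ) ∣ (a - 1) * (a + 1) :=
    dvd_trans (dvd_pow_self 2 (by omega : l ≠ 0)) hdvd
  have hodd : ∃ s : ℤ, a = 2 * s + 1 := by
    rcases Int.even_or_odd a with ⟨k, hk⟩ | ⟨k, hk⟩
    · exfalso
      obtain ⟨m, hm⟩ := h2
      rw [hk] at hm
      ring_nf at hm
      omega
    · exact ⟨k, by omega⟩
  obtain ⟨s, hs⟩ := hodd
  have hfac : (a - 1) * (a + 1) = 4 * (s * (s + 1)) := by rw [hs]; ring
  have h4 : (4 : ℤ) * 2 ^ (l - 2) ∣ 4 * (s * (s + 1)) := by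
    rw [← hfac]
    have e4 : (4 : ℤ) * 2 ^ (l - 2) = 2 ^ l := by
      rw [show l = 2 + (l - 2) by omega, pow_add]; norm_num
    rw [e4]
    exact hdvd
  have hss : (2 : ℤ) ^ (l - 2) ∣ s * (s + 1) :=
    (mul_dvd_mul_iff_left (by norm_num : (4 : ℤ) ≠ 0)).mp h4
  have hp2 : Prime (2 : ℤ) := Int.prime_two
  have e12 : (2 : ℤ) * 2 ^ (l - 2) = 2 ^ (l - 1) := by
    rw [← pow_succ']; congr 1; omega
  rcases Int.even_or_odd s with ⟨k, hk⟩ | ⟨k, hk⟩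
  · -- s even, so 2 ∤ s + 1, so 2^(l-2) ∣ s, hence 2^(l-1) ∣ a - 1
    have hns : ¬ (2 : ℤ) ∣ (s + 1) := by omega
    have hco : IsCoprime ((2 : ℤ) ^ (l - 2)) (s + 1) :=
      ((Prime.coprime_iff_not_dvd hp2).mpr hns).pow_left
    have hdvds : (2 : ℤ) ^ (l - 2) ∣ s := hco.dvd_of_dvd_mul_right hss
    have : (2 : ℤ) ^ (l - 1) ∣ (a - 1) := by
      obtain ⟨t, ht⟩ := hdvds
      exact ⟨t, by rw [hs, ht, ← e12]; ring⟩
    rcases final 1 this with h | h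
    · left; simpa using h
    · right; right; left; simpa [hc] using h
  · -- s odd, so 2 ∤ s, so 2^(l-2) ∣ s + 1, hence 2^(l-1) ∣ a + 1
    have hns : ¬ (2 : ℤ) ∣ s := by omega
    have hco : IsCoprime ((2 : ℤ) ^ (l - 2)) s :=
      ((Prime.coprime_iff_not_dvd hp2).mpr hns).pow_left
    have hdvds : (2 : ℤ) ^ (l - 2) ∣ (s + 1) := by
      apply hco.dvd_of_dvd_mul_right
      rw [mul_comm] at hss
      exact hss
    have : (2 : ℤ) ^ (l - 1) ∣ (a - (-1)) := by
      obtain ⟨t, ht⟩ := hdvds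
      refine ⟨t, ?_⟩
      rw [show a - (-1) = 2 * (s + 1) from by rw [hs]; ring, ht, ← e12]
      ring
    rcases final (-1) this with h | h
    · right; left; simpa using h
    · right; right; right
      rw [h]
      push_cast
      ring

lemma pdf_cast_prod (p l : ℕ) (hp : p.Prime) (hl : 1 ≤ l) [NeZero (p ^ l)] :
    (pDeprivedFactorial p (p ^ l) : ZMod (p ^ l)) =
      ∏ u : (ZMod (p ^ l))ˣ, (u : ZMod (p ^ l)) := by
  have hN1 : 1 < p ^ l := Nat.one_lt_pow (by omega) hp.one_lt
  have hpN : p ∣ p ^ l := dvd_pow_self p (by omega)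
  unfold pDeprivedFactorial
  rw [Nat.cast_prod]
  have hite : ∀ i : ℕ, ((if p ∣ i then 1 else i : ℕ) : ZMod (p ^ l)) =
      if ¬ p ∣ i then (i : ZMod (p ^ l)) else 1 := by
    intro i; split_ifs with h1 h2 <;> simp_all
  simp only [hite]
  rw [← Finset.prod_filter]
  refine Finset.prod_bij
    (fun i hi => ZMod.unitOfCoprime i (Nat.Coprime.pow_right l
      (((hp.coprime_iff_not_dvd).mpr (Finset.mem_filter.mp hi).2).symm)))
    (fun a ha => Finset.mem_univ _) ?_ ?_ ?_
  · intro a₁ ha₁ a₂ ha₂ h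
    have h1 := (Finset.mem_filter.mp ha₁)
    have h2 := (Finset.mem_filter.mp ha₂)
    have hv := congrArg (fun u : (ZMod (p ^ l))ˣ => (u : ZMod (p ^ l))) h
    simp only [ZMod.coe_unitOfCoprime] at hv
    have hb1 : a₁ < p ^ l := by
      rcases Finset.mem_Icc.mp h1.1 with ⟨_, hle⟩
      rcases lt_or_eq_of_le hle with h | h
      · exact h
      · exact absurd (h ▸ hpN) h1.2
    have hb2 : a₂ < p ^ l := by
      rcases Finset.mem_Icc.mp h2.1 with ⟨_, hle⟩
      rcases lt_or_eq_of_le hle with h | h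
      · exact h
      · exact absurd (h ▸ hpN) h2.2
    have := congrArg ZMod.val hv
    rwa [ZMod.val_cast_of_lt hb1, ZMod.val_cast_of_lt hb2] at this
  · intro u _
    refine ⟨(u : ZMod (p ^ l)).val, ?_, ?_⟩
    · have hcop := ZMod.val_coe_unit_coprime u
      have hne : (u : ZMod (p ^ l)).val ≠ 0 := by
        intro h0
        rw [h0] at hcop
        simp [Nat.coprime_zero_left] at hcop
        rcases hcop with h | h
        · exact hp.one_lt.ne' h
        · omega
      have hlt : (u : ZMod (p ^ l)).val < p ^ l := ZMod.val_lt _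
      have hnd : ¬ p ∣ (u : ZMod (p ^ l)).val := by
        intro hdvd
        have : p ∣ Nat.gcd (u : ZMod (p ^ l)).val (p ^ l) := Nat.dvd_gcd hdvd hpN
        rw [hcop] at this
        exact hp.one_lt.ne' (Nat.dvd_one.mp this)
      refine Finset.mem_filter.mpr ⟨Finset.mem_Icc.mpr ⟨by omega, by omega⟩, hnd⟩
    · apply Units.ext
      simp only [ZMod.coe_unitOfCoprime]
      rw [ZMod.natCast_val, ZMod.cast_id]
  · intro a ha
    simp only [ZMod.coe_unitOfCoprime]

lemma prod_units_filter {G : Type*} [CommGroup G] [Fintype G] [DecidableEq G] :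
    ∏ u : G, u = ∏ u ∈ Finset.univ.filter (fun u => u * u = 1), u := by
  rw [← Finset.prod_filter_mul_prod_filter_not Finset.univ (fun u => u * u = 1)
    (fun u => u)]
  have h1 : ∏ u ∈ Finset.univ.filter (fun u : G => ¬ u * u = 1), u = 1 := by
    refine Finset.prod_involution (f := fun u : G => u) (fun u _ => u⁻¹) ?_ ?_ ?_ ?_
    · intro a _
      show a * a⁻¹ = 1
      exact mul_inv_cancel a
    · intro a ha _ h
      have h' : a⁻¹ = a := h
      exact (Finset.mem_filter.mp ha).2 (by nth_rewrite 2 [← h']; exact mul_inv_cancel a)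
    · intro a ha
      show a⁻¹ ∈ _
      refine Finset.mem_filter.mpr ⟨Finset.mem_univ _, fun h => ?_⟩
      exact (Finset.mem_filter.mp ha).2 (by simpa [mul_inv_rev] using congrArg (·⁻¹) h)
    · intro a _
      show a⁻¹⁻¹ = a
      exact inv_inv a
  rw [h1, mul_one]

lemma wilson (p l : ℕ) (hp : p.Prime) (hl : 1 ≤ l) [NeZero (p ^ l)] :
    (pDeprivedFactorial p (p ^ l) : ZMod (p ^ l)) =
      if p = 2 ∧ 3 ≤ l then 1 else -1 := by
  by_cases hp2 : p = 2
  · subst hp2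
    rcases lt_or_ge l 3 with hl3 | hl3
    · -- l = 1 or l = 2
      rw [if_neg (by omega)]
      interval_cases l
      · have h1 : pDeprivedFactorial 2 (2 ^ 1) = 1 := by decide
        rw [h1]; decide
      · have h1 : pDeprivedFactorial 2 (2 ^ 2) = 3 := by decide
        rw [h1]; decide
    · -- l ≥ 3
      rw [if_pos ⟨rfl, hl3⟩]
      rw [pdf_cast_prod 2 l Nat.prime_two hl]
      have hcast : ∀ w : (ZMod (2 ^ l))ˣ, (∏ u : (ZMod (2 ^ l))ˣ, u) = w →
          (∏ u : (ZMod (2 ^ l))ˣ, (u : ZMod (2 ^ l))) = (w : ZMod (2 ^ l)) := by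
        intro w hw
        rw [← hw]
        exact (map_prod (Units.coeHom (ZMod (2 ^ l))) (fun u => u) Finset.univ).symm
      set c : ZMod (2 ^ l) := ((2 ^ (l - 1) : ℕ) : ZMod (2 ^ l)) with hc
      have hcc : c + c = 0 := by
        rw [hc, ← Nat.cast_add,
          show 2 ^ (l - 1) + 2 ^ (l - 1) = 2 ^ l from by
            rw [← two_mul, ← pow_succ']; congr 1; omega,
          ZMod.natCast_self]
      have hc2 : c * c = 0 := by
        rw [hc, ← Nat.cast_mul,
          show 2 ^ (l - 1) * 2 ^ (l - 1) = 2 ^ l * 2 ^ (l - 2) from by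
            rw [← pow_add, ← pow_add]; congr 1; omega,
          Nat.cast_mul, ZMod.natCast_self, zero_mul]
      have hv : (c + 1) * (c + 1) = 1 := by linear_combination hc2 + hcc
      set v : (ZMod (2 ^ l))ˣ := ⟨c + 1, c + 1, hv, hv⟩ with hvdef
      have hvval : (v : ZMod (2 ^ l)) = c + 1 := rfl
      have hnegv : ((-v : (ZMod (2 ^ l))ˣ) : ZMod (2 ^ l)) = c - 1 := by
        rw [Units.val_neg, hvval]; linear_combination -hcc
      -- distinctness of natural number representatives
      have hpow : (4 : ℕ) ≤ 2 ^ (l - 1) := by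
        calc (4 : ℕ) = 2 ^ 2 := by norm_num
        _ ≤ 2 ^ (l - 1) := Nat.pow_le_pow_right (by norm_num) (by omega)
      have hNeq : (2 : ℕ) ^ l = 2 * 2 ^ (l - 1) := by
        rw [← pow_succ']; congr 1; omega
      have hN1 : 1 < 2 ^ l := by omega
      have inj : ∀ a b : ℕ, a < 2 ^ l → b < 2 ^ l →
          ((a : ZMod (2 ^ l)) = b) → a = b := by
        intro a b haa hbb h
        have := congrArg ZMod.val h
        rwa [ZMod.val_cast_of_lt haa, ZMod.val_cast_of_lt hbb] at this
      have e1 : (1 : ZMod (2 ^ l)) = ((1 : ℕ) : ZMod (2 ^ l)) := by norm_cast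
      have em : (-1 : ZMod (2 ^ l)) = ((2 ^ l - 1 : ℕ) : ZMod (2 ^ l)) := by
        rw [Nat.cast_sub (by omega), ZMod.natCast_self]; push_cast; ring
      have ecp : c + 1 = ((2 ^ (l - 1) + 1 : ℕ) : ZMod (2 ^ l)) := by
        rw [hc]; push_cast; ring
      have ecm : c - 1 = ((2 ^ (l - 1) - 1 : ℕ) : ZMod (2 ^ l)) := by
        rw [hc, Nat.cast_sub (by omega)]; push_cast; ring
      -- the four units are distinct
      have dne : ∀ (u w : (ZMod (2 ^ l))ˣ) (a b : ℕ),
          (u : ZMod (2 ^ l)) = (a : ZMod (2 ^ l)) →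
          (w : ZMod (2 ^ l)) = (b : ZMod (2 ^ l)) →
          a < 2 ^ l → b < 2 ^ l → a ≠ b → u ≠ w := by
        intro u w a b hu hw haa hbb hne h
        exact hne (inj a b haa hbb (by rw [← hu, ← hw, h]))
      have d12 : (1 : (ZMod (2 ^ l))ˣ) ≠ -1 :=
        dne 1 (-1) 1 (2 ^ l - 1) (by rw [Units.val_one]; exact e1)
          (by rw [Units.val_neg, Units.val_one]; exact em) (by omega) (by omega) (by omega)
      have d13 : (1 : (ZMod (2 ^ l))ˣ) ≠ v :=
        dne 1 v 1 (2 ^ (l - 1) + 1) (by rw [Units.val_one]; exact e1)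
          (by rw [hvval]; exact ecp) (by omega) (by omega) (by omega)
      have d14 : (1 : (ZMod (2 ^ l))ˣ) ≠ -v :=
        dne 1 (-v) 1 (2 ^ (l - 1) - 1) (by rw [Units.val_one]; exact e1)
          (by rw [hnegv]; exact ecm) (by omega) (by omega) (by omega)
      have d23 : (-1 : (ZMod (2 ^ l))ˣ) ≠ v :=
        dne (-1) v (2 ^ l - 1) (2 ^ (l - 1) + 1)
          (by rw [Units.val_neg, Units.val_one]; exact em)
          (by rw [hvval]; exact ecp) (by omega) (by omega) (by omega)
      have d24 : (-1 : (ZMod (2 ^ l))ˣ) ≠ -v :=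
        dne (-1) (-v) (2 ^ l - 1) (2 ^ (l - 1) - 1)
          (by rw [Units.val_neg, Units.val_one]; exact em)
          (by rw [hnegv]; exact ecm) (by omega) (by omega) (by omega)
      have d34 : (v : (ZMod (2 ^ l))ˣ) ≠ -v :=
        dne v (-v) (2 ^ (l - 1) + 1) (2 ^ (l - 1) - 1)
          (by rw [hvval]; exact ecp)
          (by rw [hnegv]; exact ecm) (by omega) (by omega) (by omega)
      have hS : Finset.univ.filter (fun u : (ZMod (2 ^ l))ˣ => u * u = 1) =
          {1, -1, v, -v} := by
        ext u
        simp only [Finset.mem_filter, Finset.mem_univ, true_and,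
          Finset.mem_insert, Finset.mem_singleton]
        constructor
        · intro h
          have hval : (u : ZMod (2 ^ l)) * (u : ZMod (2 ^ l)) = 1 := by
            rw [← Units.val_mul, h, Units.val_one]
          rcases sq_cases_two l hl3 _ hval with h1 | h1 | h1 | h1
          · exact Or.inl (Units.ext (by rw [h1, Units.val_one]))
          · exact Or.inr (Or.inl (Units.ext (by
              rw [h1, Units.val_neg, Units.val_one])))
          · exact Or.inr (Or.inr (Or.inl (Units.ext (by rw [h1, hvval, hc]))))
          · exact Or.inr (Or.inr (Or.inr (Units.ext (by rw [h1, hnegv, hc]))))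
        · rintro (rfl | rfl | rfl | rfl)
          · simp
          · simp
          · exact Units.ext (by rw [Units.val_mul, hvval, hv, Units.val_one])
          · rw [neg_mul_neg]
            exact Units.ext (by rw [Units.val_mul, hvval, hv, Units.val_one])
      have hprod : ∏ u ∈ ({1, -1, v, -v} : Finset (ZMod (2 ^ l))ˣ), u = 1 := by
        rw [Finset.prod_insert (by simp [d12, d13, d14]),
          Finset.prod_insert (by simp [d23, d24]),
          Finset.prod_insert (by simp [d34]),
          Finset.prod_singleton]
        rw [one_mul, neg_one_mul, mul_neg, neg_neg]
        exact Units.ext (by rw [Units.val_mul, hvval, hv, Units.val_one])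
      rw [hcast 1 (by rw [prod_units_filter, hS, hprod])]
      simp
  · -- p odd
    rw [if_neg (by tauto)]
    rw [pdf_cast_prod p l hp hl]
    have hcast : ∀ w : (ZMod (p ^ l))ˣ, (∏ u : (ZMod (p ^ l))ˣ, u) = w →
        (∏ u : (ZMod (p ^ l))ˣ, (u : ZMod (p ^ l))) = (w : ZMod (p ^ l)) := by
      intro w hw
      rw [← hw]
      exact (map_prod (Units.coeHom (ZMod (p ^ l))) (fun u => u) Finset.univ).symm
    have hp3 : 3 ≤ p := by
      rcases hp.two_le.lt_or_eq with h | h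
      · omega
      · omega
    haveI : Fact (2 < p ^ l) := ⟨by
      calc (2 : ℕ) < p := by omega
      _ = p ^ 1 := (pow_one p).symm
      _ ≤ p ^ l := Nat.pow_le_pow_right (by omega) hl⟩
    have d12 : (1 : (ZMod (p ^ l))ˣ) ≠ -1 := by
      intro h
      have := congrArg Units.val h
      rw [Units.val_one, Units.val_neg, Units.val_one] at this
      exact ZMod.neg_one_ne_one this.symm
    have hS : Finset.univ.filter (fun u : (ZMod (p ^ l))ˣ => u * u = 1) =
        {1, -1} := by
      ext u
      simp only [Finset.mem_filter, Finset.mem_univ, true_and,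
        Finset.mem_insert, Finset.mem_singleton]
      constructor
      · intro h
        have hval : (u : ZMod (p ^ l)) * (u : ZMod (p ^ l)) = 1 := by
          rw [← Units.val_mul, h, Units.val_one]
        rcases sq_cases_odd p l hp hp2 _ hval with h1 | h1
        · exact Or.inl (Units.ext (by rw [h1, Units.val_one]))
        · exact Or.inr (Units.ext (by rw [h1, Units.val_neg, Units.val_one]))
      · rintro (rfl | rfl) <;> simp
    have hprod : ∏ u ∈ ({1, -1} : Finset (ZMod (p ^ l))ˣ), u = -1 := by
      rw [Finset.prod_pair d12, one_mul]
    rw [hcast (-1) (by rw [prod_units_filter, hS, hprod])]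
    simp

lemma pdf_cast_range (p N m : ℕ) :
    ((pDeprivedFactorial p m : ℕ) : ZMod N) =
      ∏ i ∈ Finset.range m,
        (if p ∣ (1 + i) then 1 else ((1 + i : ℕ) : ZMod N)) := by
  unfold pDeprivedFactorial
  rw [Nat.cast_prod, ← Finset.Ico_add_one_right_eq_Icc, Finset.prod_Ico_eq_prod_range]
  apply Finset.prod_congr rfl
  intro i _
  split_ifs <;> simp

lemma pdf_key (p l m : ℕ) (hp : p.Prime) (hl : 1 ≤ l) [NeZero (p ^ l)] :
    ((pDeprivedFactorial p m : ℕ) : ZMod (p ^ l)) =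
      ((pDeprivedFactorial p (p ^ l) : ℕ) : ZMod (p ^ l)) ^ (m / p ^ l) *
        ((pDeprivedFactorial p (m % p ^ l) : ℕ) : ZMod (p ^ l)) := by
  set N := p ^ l with hN
  have hpN : p ∣ N := hN ▸ dvd_pow_self p (by omega)
  set g : ℕ → ZMod N := fun i => if p ∣ (1 + i) then 1 else ((1 + i : ℕ) : ZMod N)
    with hg
  have hper : ∀ i, g (i + N) = g i := by
    intro i
    have hiff : (p ∣ 1 + (i + N)) ↔ (p ∣ 1 + i) := by
      rw [show 1 + (i + N) = (1 + i) + N from by ring]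
      exact ⟨fun h => (Nat.dvd_add_iff_left hpN).mpr h,
        fun h => (Nat.dvd_add_iff_left hpN).mp h⟩
    have hcast : ((1 + (i + N) : ℕ) : ZMod N) = ((1 + i : ℕ) : ZMod N) := by
      push_cast [ZMod.natCast_self]
      ring
    rw [hg]
    simp only [hiff, hcast]
  rw [pdf_cast_range p N m, pdf_cast_range p N N, pdf_cast_range p N (m % N)]
  conv_lhs => rw [show m = (m / N) * N + m % N from (Nat.div_add_mod' m N).symm]
  exact prod_range_periodic g N hper (m / N) (m % N)


/-- Granville's result ([granville, Corollary 1]): with `t_j(n) = ⌊n/p^j⌋` and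
`t_{j,l}(n) = t_j(n) mod p^l`, we have
`t_j(n)! = t_j(n)!_p · t_{j+1}(n)! · p^{t_{j+1}(n)}` and
`t_j(n)!_p ≡ δ^{t_{j+l}(n)} · t_{j,l}(n)!_p (mod p^l)`,
where `δ = 1` if `p = 2` and `l ≥ 3`, and `δ = -1` otherwise. -/
theorem stmt10 (p : ℕ) (hp : p.Prime) (n j l : ℕ) :
    (n / p ^ j).factorial =
      pDeprivedFactorial p (n / p ^ j) * (n / p ^ (j + 1)).factorial *
        p ^ (n / p ^ (j + 1)) ∧
    (pDeprivedFactorial p (n / p ^ j) : ℤ) ≡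
      (if p = 2 ∧ 3 ≤ l then (1 : ℤ) else -1) ^ (n / p ^ (j + l)) *
        (pDeprivedFactorial p ((n / p ^ j) % p ^ l) : ℤ) [ZMOD (p ^ l : ℕ)] := by
  constructor
  · have h := part1 p hp (n / p ^ j)
    rw [pow_succ, ← Nat.div_div_eq_div_mul]
    exact h
  · rcases Nat.eq_zero_or_pos l with rfl | hl
    · simpa using Int.modEq_one
    · haveI : NeZero (p ^ l) := ⟨pow_ne_zero l hp.ne_zero⟩
      rw [← ZMod.intCast_eq_intCast_iff]
      have hδ : (((if p = 2 ∧ 3 ≤ l then (1 : ℤ) else -1) : ℤ) : ZMod (p ^ l)) =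
          if p = 2 ∧ 3 ≤ l then 1 else -1 := by
        split_ifs <;> simp
      push_cast [hδ]
      rw [pdf_key p l (n / p ^ j) hp hl, wilson p l hp hl]
      congr 2
      rw [Nat.div_div_eq_div_mul, ← pow_add]
end

section
/- Define an action of 2×2 integer matrices with nonzero determinant on Z[z₁,z₂] by (α·φ)(z) = φ(zα) where z = (z₁, z₂) is a row vector. For k ≥ 0, let L_k ⊂ Z[z₁,z₂] be the Z-submodule generated by { C(k,i)·z₁^{k−i} z₂^i : 0 ≤ i ≤ k }. Then L_k is stable under this action. -/
open MvPolynomial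

/-- The action of `α ∈ M₂(ℤ)` on `ℤ[z₁,z₂]` by `(α·φ)(z) = φ(zα)`, where
`z = (z₁,z₂)` is a row vector, so `(zα)_j = ∑_i z_i α_{ij}`. -/
noncomputable def matAct (α : Matrix (Fin 2) (Fin 2) ℤ) :
    MvPolynomial (Fin 2) ℤ →ₐ[ℤ] MvPolynomial (Fin 2) ℤ :=
  MvPolynomial.aeval fun j : Fin 2 => ∑ i : Fin 2, MvPolynomial.C (α i j) * X i

lemma keyNat (s p t q : ℕ) :
    (s+p+t+q).choose (t+q) * ((s+p).choose s * ((t+q).choose t))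
      = ((s+t).choose s * ((p+q).choose q)) * (s+p+t+q).choose (p+q) := by
  have hf : ∀ n : ℕ, ((n.factorial : ℚ)) ≠ 0 := fun n => Nat.cast_ne_zero.2 n.factorial_ne_zero
  rw [← Nat.cast_inj (R := ℚ)]
  push_cast
  rw [Nat.cast_choose ℚ (show t+q ≤ s+p+t+q by omega),
      Nat.cast_choose ℚ (show s ≤ s+p by omega),
      Nat.cast_choose ℚ (show t ≤ t+q by omega),
      Nat.cast_choose ℚ (show s ≤ s+t by omega),
      Nat.cast_choose ℚ (show q ≤ p+q by omega),
      Nat.cast_choose ℚ (show p+q ≤ s+p+t+q by omega)]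
  rw [show s+p+t+q-(t+q) = s+p by omega, show s+p-s = p by omega,
      show t+q-t = q by omega, show s+t-s = t by omega,
      show p+q-q = p by omega, show s+p+t+q-(p+q) = s+t by omega]
  field_simp

/-- The submodule `L_k ⊂ ℤ[z₁,z₂]` generated by `{ C(k,i) z₁^{k-i} z₂^i : 0 ≤ i ≤ k }`
is stable under the action of any integer matrix with nonzero determinant. -/
theorem stmt13 (k : ℕ) (α : Matrix (Fin 2) (Fin 2) ℤ) (hα : α.det ≠ 0)
    (φ : MvPolynomial (Fin 2) ℤ)
    (hφ : φ ∈ Submodule.span ℤ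
      (Set.range fun i : Fin (k + 1) =>
        (k.choose i : ℤ) • ((X 0 : MvPolynomial (Fin 2) ℤ) ^ (k - (i : ℕ)) * X 1 ^ (i : ℕ)))) :
    matAct α φ ∈ Submodule.span ℤ
      (Set.range fun i : Fin (k + 1) =>
        (k.choose i : ℤ) • ((X 0 : MvPolynomial (Fin 2) ℤ) ^ (k - (i : ℕ)) * X 1 ^ (i : ℕ))) := by
  induction hφ using Submodule.span_induction with
  | mem x hx =>
    obtain ⟨i, rfl⟩ := hx
    have hi : (i : ℕ) ≤ k := Nat.lt_succ_iff.mp i.isLt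
    rw [map_smul, map_mul, map_pow, map_pow]
    have h0 : matAct α (X 0) = C (α 0 0) * X 0 + C (α 1 0) * X 1 := by
      simp [matAct, Fin.sum_univ_two]
    have h1 : matAct α (X 1) = C (α 0 1) * X 0 + C (α 1 1) * X 1 := by
      simp [matAct, Fin.sum_univ_two]
    rw [h0, h1, add_pow, add_pow, Finset.sum_mul_sum, Finset.smul_sum]
    apply Submodule.sum_mem
    intro s hs
    rw [Finset.smul_sum]
    apply Submodule.sum_mem
    intro t ht
    simp only [Finset.mem_range] at hs ht
    obtain ⟨p, hp⟩ : ∃ p, k - (i : ℕ) = s + p := ⟨k - i - s, by omega⟩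
    obtain ⟨q, hq⟩ : ∃ q, (i : ℕ) = t + q := ⟨(i : ℕ) - t, by omega⟩
    have hk : k = s + p + t + q := by omega
    have e1 : k - (i : ℕ) - s = p := by omega
    have e2 : (i : ℕ) - t = q := by omega
    have hkey : (k.choose i : ℤ) •
        ((C (α 0 0) * X 0) ^ s * (C (α 1 0) * X 1) ^ (k - (i:ℕ) - s) * ((k - (i:ℕ)).choose s : MvPolynomial (Fin 2) ℤ) *
          ((C (α 0 1) * X 0) ^ t * (C (α 1 1) * X 1) ^ ((i:ℕ) - t) * ((i:ℕ).choose t : MvPolynomial (Fin 2) ℤ)))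
        = (α 0 0 ^ s * α 1 0 ^ p * α 0 1 ^ t * α 1 1 ^ q * ((s+t).choose s : ℤ) * ((p+q).choose q : ℤ)) •
          ((k.choose (p+q) : ℤ) • ((X 0 : MvPolynomial (Fin 2) ℤ) ^ (k - (p+q)) * X 1 ^ (p+q))) := by
      rw [e1, e2, hp, hq, show k - (p + q) = s + t by omega, hk]
      rw [smul_eq_C_mul, smul_eq_C_mul, smul_eq_C_mul]
      push_cast
      have hZ : ((s+p+t+q).choose (t+q) : ℤ) * (((s+p).choose s : ℤ) * ((t+q).choose t : ℤ))
          = ((s+t).choose s : ℤ) * ((p+q).choose q : ℤ) * ((s+p+t+q).choose (p+q) : ℤ) := by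
        exact_mod_cast congrArg (Nat.cast : ℕ → ℤ) (keyNat s p t q)
      have hZ' : (C (((s+p+t+q).choose (t+q) : ℤ)) : MvPolynomial (Fin 2) ℤ) *
            (C (((s+p).choose s : ℤ)) * C (((t+q).choose t : ℤ)))
          = C (((s+t).choose s : ℤ)) * C (((p+q).choose q : ℤ)) *
            C (((s+p+t+q).choose (p+q) : ℤ)) := by
        rw [← C_mul, ← C_mul, ← C_mul, ← C_mul, hZ]
      have hcast : ∀ n : ℕ, ((n : MvPolynomial (Fin 2) ℤ)) = C ((n : ℤ)) := fun n => by simp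
      simp only [hcast, C_mul, C_pow]
      linear_combination (C (α 0 0) ^ s * C (α 1 0) ^ p * C (α 0 1) ^ t * C (α 1 1) ^ q *
        X 0 ^ (s + t) * X 1 ^ (p + q)) * hZ'
    rw [hkey]
    exact Submodule.smul_mem _ _ (Submodule.subset_span ⟨⟨p + q, by omega⟩, rfl⟩)
  | zero => simp
  | add x y _ _ hx hy => rw [map_add]; exact Submodule.add_mem _ hx hy
  | smul a x _ hx => rw [map_smul]; exact Submodule.smul_mem _ a hx
end

section
/- Let D = z₁₂ ∂/∂z₁₁ + z₂₂ ∂/∂z₂₁ act on Z[z₁₁,z₁₂,z₂₁,z₂₂] and φ(z) = z₁₁² + z₂₁². Then for all k, l ≥ 0, (1/l!)·D^l(φ^k) is a polynomial with integer coefficients; explicitly (1/l!) D^l φ^k = ∑_{i=0}^l ∑_{j=0}^k C(2k−2j, l−i) C(2j, i) C(k, j) z₁₁^{2k−2j−l+i} z₁₂^{l−i} z₂₁^{2j−i} z₂₂^i. -/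
open MvPolynomial

/-- The derivation `D = z₁₂ ∂/∂z₁₁ + z₂₂ ∂/∂z₂₁` on `ℤ[z₁₁,z₁₂,z₂₁,z₂₂]`,
with variables `z₁₁ = X 0`, `z₁₂ = X 1`, `z₂₁ = X 2`, `z₂₂ = X 3`. -/
noncomputable def Dop (f : MvPolynomial (Fin 4) ℤ) : MvPolynomial (Fin 4) ℤ :=
  X 1 * pderiv 0 f + X 3 * pderiv 2 f

noncomputable def DopL : MvPolynomial (Fin 4) ℤ →ₗ[ℤ] MvPolynomial (Fin 4) ℤ where
  toFun := Dop
  map_add' a b := by simp [Dop]; ring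
  map_smul' n f := by simp [Dop, mul_add]; ring

lemma Dop_iterate_eq (l : ℕ) (f : MvPolynomial (Fin 4) ℤ) :
    Dop^[l] f = (DopL ^ l) f := by
  induction l with
  | zero => simp
  | succ n ih => rw [Function.iterate_succ_apply', ih, pow_succ', Module.End.mul_apply]; rfl

lemma Dop_mono (a b c d : ℕ) :
    Dop ((X 0 : MvPolynomial (Fin 4) ℤ)^a * X 1^b * X 2^c * X 3^d) =
      (a : ℤ) • (X 0^(a-1) * X 1^(b+1) * X 2^c * X 3^d) +
      (c : ℤ) • (X 0^a * X 1^b * X 2^(c-1) * X 3^(d+1)) := by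
  simp [Dop, pderiv_pow, pderiv_X, Pi.single_apply]
  ring

lemma key (a c : ℕ) : ∀ l, Dop^[l] ((X 0 : MvPolynomial (Fin 4) ℤ)^a * X 2^c) =
    (l.factorial : ℤ) • ∑ i ∈ Finset.range (l+1),
      ((a.choose (l-i) * c.choose i : ℕ) : ℤ) •
        ((X 0 : MvPolynomial (Fin 4) ℤ)^(a-(l-i)) * X 1^(l-i) * X 2^(c-i) * X 3^i) := by
  intro l
  induction l with
  | zero => simp
  | succ l ih =>
    rw [Function.iterate_succ_apply', ih]
    have hD : ∀ f, Dop f = DopL f := fun _ => rfl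
    rw [hD, map_smul, map_sum]
    simp_rw [map_smul, ← hD, Dop_mono]
    rw [Nat.factorial_succ, Nat.cast_mul, mul_comm, mul_smul]
    congr 1
    -- now: ∑ i in range (l+1), C • (a' • M1 + c' • M2) = (l+1 : ℤ) • ∑ i in range (l+2), ...
    have expand : (((l+1 : ℕ)) : ℤ) • ∑ i ∈ Finset.range (l+2),
        ((a.choose (l+1-i) * c.choose i : ℕ) : ℤ) •
          ((X 0 : MvPolynomial (Fin 4) ℤ)^(a-(l+1-i)) * X 1^(l+1-i) * X 2^(c-i) * X 3^i)
        = (∑ i ∈ Finset.range (l+2),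
            (((l+1-i) * (a.choose (l+1-i) * c.choose i) : ℕ) : ℤ) •
              ((X 0 : MvPolynomial (Fin 4) ℤ)^(a-(l+1-i)) * X 1^(l+1-i) * X 2^(c-i) * X 3^i))
          + (∑ i ∈ Finset.range (l+2),
            ((i * (a.choose (l+1-i) * c.choose i) : ℕ) : ℤ) •
              ((X 0 : MvPolynomial (Fin 4) ℤ)^(a-(l+1-i)) * X 1^(l+1-i) * X 2^(c-i) * X 3^i)) := by
      rw [Finset.smul_sum, ← Finset.sum_add_distrib]
      refine Finset.sum_congr rfl fun i hi => ?_
      rw [smul_smul, ← add_smul]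
      congr 1
      have hi' : i ≤ l + 1 := by simpa [Nat.lt_succ_iff] using hi
      have : ((l+1-i : ℕ) : ℤ) = (l : ℤ) + 1 - i := by omega
      push_cast [this]
      ring
    rw [expand]
    clear expand
    have h1 : (∑ i ∈ Finset.range (l+2),
            (((l+1-i) * (a.choose (l+1-i) * c.choose i) : ℕ) : ℤ) •
              ((X 0 : MvPolynomial (Fin 4) ℤ)^(a-(l+1-i)) * X 1^(l+1-i) * X 2^(c-i) * X 3^i))
        = ∑ i ∈ Finset.range (l+1),
            ((a.choose (l-i) * c.choose i : ℕ) : ℤ) •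
              ((a - (l-i) : ℕ) : ℤ) • ((X 0 : MvPolynomial (Fin 4) ℤ)^(a-(l-i)-1) * X 1^((l-i)+1) * X 2^(c-i) * X 3^i) := by
      rw [Finset.sum_range_succ]
      simp only [Nat.sub_self, zero_mul, Nat.cast_zero, zero_smul, add_zero]
      refine Finset.sum_congr rfl fun i hi => ?_
      have hi' : i ≤ l := by simpa [Nat.lt_succ_iff] using hi
      have he1 : l + 1 - i = (l - i) + 1 := by omega
      have he2 : a - (l+1-i) = a - (l-i) - 1 := by omega
      rw [he2, he1, smul_smul]
      congr 1
      have h := Nat.choose_succ_right_eq a (l - i)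
      have hn : (l-i+1) * (a.choose (l-i+1) * c.choose i)
          = a.choose (l-i) * c.choose i * (a - (l-i)) := by
        rw [show (l-i+1)*(a.choose (l-i+1)*c.choose i)
            = (a.choose (l-i+1)*(l-i+1))*c.choose i from by ring, h]
        ring
      exact_mod_cast congrArg (Nat.cast : ℕ → ℤ) hn
    have h2 : (∑ i ∈ Finset.range (l+2),
            ((i * (a.choose (l+1-i) * c.choose i) : ℕ) : ℤ) •
              ((X 0 : MvPolynomial (Fin 4) ℤ)^(a-(l+1-i)) * X 1^(l+1-i) * X 2^(c-i) * X 3^i))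
        = ∑ i ∈ Finset.range (l+1),
            ((a.choose (l-i) * c.choose i : ℕ) : ℤ) •
              ((c - i : ℕ) : ℤ) • ((X 0 : MvPolynomial (Fin 4) ℤ)^(a-(l-i)) * X 1^(l-i) * X 2^(c-i-1) * X 3^(i+1)) := by
      rw [Finset.sum_range_succ']
      simp only [Nat.zero_eq, zero_mul, Nat.cast_zero, zero_smul, add_zero]
      refine Finset.sum_congr rfl fun i hi => ?_
      have hi' : i ≤ l := by simpa [Nat.lt_succ_iff] using hi
      have he1 : l + 1 - (i+1) = l - i := by omega
      have he2 : c - (i+1) = c - i - 1 := by omega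
      rw [he2, he1, smul_smul]
      congr 1
      have h := Nat.choose_succ_right_eq c i
      have hn : (i+1) * (a.choose (l-i) * c.choose (i+1))
          = a.choose (l-i) * c.choose i * (c - i) := by
        rw [show (i+1)*(a.choose (l-i)*c.choose (i+1))
            = a.choose (l-i)*(c.choose (i+1)*(i+1)) from by ring, h]
        ring
      exact_mod_cast congrArg (Nat.cast : ℕ → ℤ) hn
    rw [h1, h2, ← Finset.sum_add_distrib]
    refine Finset.sum_congr rfl fun i hi => ?_
    rw [← smul_add]

/-- With `φ = z₁₁² + z₂₁²`, for all `k, l ≥ 0` the polynomial `D^l(φ^k)` equals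
`l!` times the explicit integral polynomial
`∑_{i=0}^l ∑_{j=0}^k C(2k-2j,l-i) C(2j,i) C(k,j) z₁₁^{2k-2j-l+i} z₁₂^{l-i} z₂₁^{2j-i} z₂₂^i`;
in particular `(1/l!) D^l(φ^k)` has integer coefficients. -/
theorem stmt14 (k l : ℕ) :
    Dop^[l] (((X 0 : MvPolynomial (Fin 4) ℤ) ^ 2 + X 2 ^ 2) ^ k) =
      (l.factorial : ℤ) •
        ∑ i ∈ Finset.range (l + 1), ∑ j ∈ Finset.range (k + 1),
          (((2 * k - 2 * j).choose (l - i) * (2 * j).choose i * k.choose j : ℕ) : ℤ) •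
            ((X 0 : MvPolynomial (Fin 4) ℤ) ^ (2 * k - 2 * j - (l - i)) *
              X 1 ^ (l - i) * X 2 ^ (2 * j - i) * X 3 ^ i) := by
  have hexp : ((X 0 : MvPolynomial (Fin 4) ℤ)^2 + X 2^2)^k
      = ∑ j ∈ Finset.range (k+1),
          ((k.choose j : ℕ) : ℤ) • ((X 0 : MvPolynomial (Fin 4) ℤ)^(2*k-2*j) * X 2^(2*j)) := by
    rw [add_comm, add_pow]
    refine Finset.sum_congr rfl fun j hj => ?_
    have hj' : j ≤ k := Nat.lt_succ_iff.mp (Finset.mem_range.mp hj)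
    rw [← pow_mul, ← pow_mul, show 2*(k-j) = 2*k - 2*j from by omega, zsmul_eq_mul]
    push_cast
    ring
  rw [hexp, Dop_iterate_eq, map_sum]
  simp_rw [map_smul, ← Dop_iterate_eq, key]
  have hc : ∀ (j : ℕ) (x : MvPolynomial (Fin 4) ℤ),
      ((k.choose j : ℕ) : ℤ) • ((l.factorial : ℤ) • x)
        = (l.factorial : ℤ) • (((k.choose j : ℕ) : ℤ) • x) := fun j x => smul_comm _ _ _
  simp_rw [hc]
  rw [← Finset.smul_sum]
  congr 1
  rw [Finset.sum_comm]
  refine Finset.sum_congr rfl fun j _ => ?_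
  rw [Finset.smul_sum]
  refine Finset.sum_congr rfl fun i _ => ?_
  rw [smul_smul]
  congr 1
  push_cast
  ring
end
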